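/- arXiv:math/0703076 — 6 statements merged into one kernel-verified Lean document; each statement's English description precedes it below -/
import Mathlib

section
/- Fix a probability space with distribution F, a measurable function a with essential infimum ξ, and u with max(0,ξ) < u < E = ∫ a dF. For t ∈ (0, u/(u-ξ)) define w_u(t) = ∫ (a(x)-u)/(a(x)t - ut + u) dF(x). Then w_u is strictly decreasing in t. -/
open MeasureTheory Real Filter Set

/-! For each `x`, `t ↦ (a x - u) / ((a x - u) t + u)` is a Möbius map, strictly decreasing
unless `a x = u`, and on `(0, u/(u-ξ))` its denominator stays above `u - (u - ξ) t > 0`, so it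
is bounded uniformly in `x`. Strict decrease on `{a < u}`, which has positive measure because
`ξ` is the essential infimum, passes to the integral. -/

theorem strictAntiOn_integral_of_ae {Ω : Type*} [MeasurableSpace Ω] {μ : Measure Ω}
    {f : ℝ → Ω → ℝ} {S : Set ℝ} (hint : ∀ t ∈ S, Integrable (f t) μ)
    (hanti : ∀ᵐ x ∂μ, AntitoneOn (fun t => f t x) S)
    (hstrict : 0 < μ {x | StrictAntiOn (fun t => f t x) S}) :
    StrictAntiOn (fun t => ∫ x, f t x ∂μ) S := by
  intro s hs t ht hst
  have hnonneg : 0 ≤ᵐ[μ] fun x => f s x - f t x := by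
    filter_upwards [hanti] with x hx
    exact sub_nonneg.mpr (hx hs ht hst.le)
  have hsupport : {x | StrictAntiOn (fun t => f t x) S} ⊆
      Function.support fun x => f s x - f t x :=
    fun x hx => (sub_pos.mpr (hx hs ht hst)).ne'
  have hpos : 0 < ∫ x, f s x - f t x ∂μ :=
    (integral_pos_iff_support_of_nonneg_ae hnonneg ((hint s hs).sub (hint t ht))).mpr
      (hstrict.trans_le (measure_mono hsupport))
  rw [integral_sub (hint s hs) (hint t ht)] at hpos
  exact sub_pos.mp hpos

section MobiusIntegrand

variable {ξ u v s t : ℝ}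

lemma mul_lt_of_mem_Ioo_div (hξu : ξ < u) (ht : t ∈ Ioo 0 (u / (u - ξ))) :
    (u - ξ) * t < u := by
  have := (lt_div_iff₀ (sub_pos.mpr hξu)).mp ht.2
  linarith

lemma mobius_denom_pos (hv : ξ ≤ v) (ht : 0 < t) (htu : (u - ξ) * t < u) :
    0 < v * t - u * t + u := by
  nlinarith [mul_nonneg (sub_nonneg.mpr hv) ht.le]

lemma abs_mobius_le (hu : 0 ≤ u) (hξu : ξ ≤ u) (hv : ξ ≤ v) (ht : 0 < t) (htu : (u - ξ) * t < u) :
    |(v - u) / (v * t - u * t + u)| ≤ 1 / t + (u - ξ) / (u - (u - ξ) * t) := by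
  have hc : 0 < u - (u - ξ) * t := by linarith
  have hD := mobius_denom_pos hv ht htu
  rw [abs_div, abs_of_pos hD]
  rcases le_or_gt u v with h | h
  · have hle : |v - u| / (v * t - u * t + u) ≤ 1 / t := by
      rw [abs_of_nonneg (sub_nonneg.mpr h), div_le_div_iff₀ hD ht]
      nlinarith
    have : 0 ≤ (u - ξ) / (u - (u - ξ) * t) := div_nonneg (sub_nonneg.mpr hξu) hc.le
    linarith
  · have hle : |v - u| / (v * t - u * t + u) ≤ (u - ξ) / (u - (u - ξ) * t) := by
      rw [abs_of_neg (sub_neg.mpr h)]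
      exact div_le_div₀ (by linarith) (by linarith) hc
        (by nlinarith [mul_nonneg (sub_nonneg.mpr hv) ht.le])
    have : 0 ≤ 1 / t := by positivity
    linarith

lemma strictAntiOn_mobius (hξu : ξ < u) (hv : ξ ≤ v) (hvu : v ≠ u) :
    StrictAntiOn (fun t => (v - u) / (v * t - u * t + u)) (Ioo 0 (u / (u - ξ))) := by
  intro s hs t ht hst
  have hDs := mobius_denom_pos hv hs.1 (mul_lt_of_mem_Ioo_div hξu hs)
  have hDt := mobius_denom_pos hv ht.1 (mul_lt_of_mem_Ioo_div hξu ht)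
  have hsq : 0 < (v - u) ^ 2 := pow_two_pos_of_ne_zero (sub_ne_zero.mpr hvu)
  -- cross-multiplied, the claim is `(v - u)² (t - s) > 0`
  rw [div_lt_div_iff₀ hDt hDs]
  nlinarith [mul_pos hsq (sub_pos.mpr hst)]

lemma antitoneOn_mobius (hξu : ξ < u) (hv : ξ ≤ v) :
    AntitoneOn (fun t => (v - u) / (v * t - u * t + u)) (Ioo 0 (u / (u - ξ))) := by
  rcases eq_or_ne v u with rfl | hvu
  · simp only [sub_self, zero_div]
    exact antitoneOn_const
  · exact (strictAntiOn_mobius hξu hv hvu).antitoneOn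

end MobiusIntegrand

lemma integrable_mobius {Ω : Type*} [MeasurableSpace Ω] {μ : Measure Ω} [IsFiniteMeasure μ]
    {a : Ω → ℝ} (hmeas : Measurable a) {ξ u t : ℝ} (hge : ∀ᵐ x ∂μ, ξ ≤ a x) (hu : 0 ≤ u)
    (hξu : ξ ≤ u) (ht : 0 < t) (htu : (u - ξ) * t < u) :
    Integrable (fun x => (a x - u) / (a x * t - u * t + u)) μ :=
  Integrable.of_bound (by fun_prop : Measurable _).aestronglyMeasurable _ <| by
    filter_upwards [hge] with x hx
    exact abs_mobius_le hu hξu hx ht htu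

theorem stmt2_general {Ω : Type*} [MeasurableSpace Ω] (μ : Measure Ω) [IsProbabilityMeasure μ]
    (a : Ω → ℝ) (hmeas : Measurable a) (ξ : ℝ)
    (hge : ∀ᵐ x ∂μ, ξ ≤ a x)
    (hinf : ∀ ε > 0, 0 < μ {x | a x < ξ + ε})
    (u : ℝ) (hu : max 0 ξ < u) :
    StrictAntiOn (fun t => ∫ x, (a x - u) / (a x * t - u * t + u) ∂μ)
      (Ioo 0 (u / (u - ξ))) := by
  obtain ⟨hu0, hξu⟩ := max_lt_iff.mp hu
  have hbelow : 0 < μ {x | a x < u} := by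
    simpa using hinf (u - ξ) (sub_pos.mpr hξu)
  refine strictAntiOn_integral_of_ae
    (fun t ht => integrable_mobius hmeas hge hu0.le hξu.le ht.1 (mul_lt_of_mem_Ioo_div hξu ht))
    (hge.mono fun x hx => antitoneOn_mobius hξu hx)
    (hbelow.trans_le (measure_mono_ae ?_))
  filter_upwards [hge] with x hx hxu
  exact strictAntiOn_mobius hξu hx (ne_of_lt hxu)

/-- For `max(0,ξ) < u < E` (where `E = ∫ a dF`, possibly `+∞`, i.e. `a` not
integrable), the function `w_u(t) = ∫ (a-u)/(a t - u t + u) dF` is strictly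
decreasing on `(0, u/(u-ξ))`. -/
theorem stmt2 {Ω : Type*} [MeasurableSpace Ω] (μ : Measure Ω) [IsProbabilityMeasure μ]
    (a : Ω → ℝ) (hmeas : Measurable a) (ξ : ℝ)
    (hge : ∀ᵐ x ∂μ, ξ ≤ a x)
    (hinf : ∀ ε > 0, 0 < μ {x | a x < ξ + ε})
    (hnc : ∃ δ > 0, μ {x | a x < ξ + δ} < 1)
    (u : ℝ) (hu : max 0 ξ < u)
    (huE : u < ∫ x, a x ∂μ ∨ ¬ Integrable a μ) :
    StrictAntiOn (fun t => ∫ x, (a x - u) / (a x * t - u * t + u) ∂μ)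
      (Ioo 0 (u / (u - ξ))) :=
  stmt2_general μ a hmeas ξ hge hinf u hu
end

section
/- If max(0, ξ + 1/H_ξ) < u < E, then the equation w_u(t) = 0 has a unique solution t̃_u in the interval (0, u/(u-ξ)), where w_u(t) = ∫ (a-u)/(a t - u t + u) dF. -/
/-!
Write `T = u/(u-ξ)` and `d_t(a) = a t - u t + u = t (a - ξ) + (u - ξ)(T - t)`, which is positive
for `0 < t < T`. Since `(a-u)/d_s - (a-u)/d_t = (a-u)² (t-s) / (d_s d_t)`, `w_u` is strictly
decreasing on `(0, T)` unless `a = u` a.e.; it is continuous there by dominated convergence.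

The signs at the two ends both come from Fatou's lemma. Near `0` the integrand is bounded below
by `-2/T` and tends to `(a-u)/u`, whose integral `E/u - 1` is positive (possibly `+∞`). Near `T`,
write the integrand as `(1 - u/d_t)/t`: then `w_u(t) < 0` iff `∫ u/d_t > 1`, and `u/d_t` tends
to `(u-ξ)/(a-ξ)`, whose integral `(u-ξ) H_ξ` exceeds `1` exactly when `u > ξ + 1/H_ξ`.
The intermediate value theorem then gives the zero.
-/

open MeasureTheory Real Filter Set
open scoped ENNReal Topology

section Measure

variable {Ω : Type*} [MeasurableSpace Ω] {μ : Measure Ω}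

lemma integral_lt_integral_of_ae_le_of_measure_setOf_lt_ne_zero {f g : Ω → ℝ}
    (hf : Integrable f μ) (hg : Integrable g μ) (hfg : f ≤ᵐ[μ] g)
    (hlt : μ {x | f x < g x} ≠ 0) : ∫ x, f x ∂μ < ∫ x, g x ∂μ := by
  have hpos : 0 < ∫ x, (g - f) x ∂μ := by
    rw [integral_pos_iff_support_of_nonneg_ae
      (by filter_upwards [hfg] with x hx using sub_nonneg.2 hx) (hg.sub hf)]
    refine pos_iff_ne_zero.2 fun h => hlt (measure_mono_null (fun x hx => ?_) h)
    exact (sub_pos.2 (show f x < g x from hx)).ne'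
  rw [Pi.sub_def, integral_sub hg hf] at hpos
  linarith

lemma le_liminf_ofReal_of_tendsto {F : ℕ → ℝ} {y : ℝ} (h : Tendsto F atTop (𝓝 y)) :
    ENNReal.ofReal y ≤ liminf (fun n => ENNReal.ofReal (F n)) atTop :=
  ((ENNReal.continuous_ofReal.tendsto y).comp h).liminf_eq.ge

lemma exists_lt_integral_of_le_liminf {F : ℕ → Ω → ℝ} {G : Ω → ℝ≥0∞} {c : ℝ}
    (hF : ∀ n, Integrable (F n) μ) (hF₀ : ∀ n, 0 ≤ᵐ[μ] F n)
    (hG : ∀ᵐ x ∂μ, G x ≤ liminf (fun n => ENNReal.ofReal (F n x)) atTop)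
    (hc : ENNReal.ofReal c < ∫⁻ x, G x ∂μ) : ∃ n, c < ∫ x, F n x ∂μ := by
  have fatou : ∫⁻ x, G x ∂μ ≤ liminf (fun n => ∫⁻ x, ENNReal.ofReal (F n x) ∂μ) atTop :=
    (lintegral_mono_ae hG).trans
      (lintegral_liminf_le' fun n => (hF n).aemeasurable.ennreal_ofReal)
  obtain ⟨n, hn⟩ := (eventually_lt_of_lt_liminf (hc.trans_le fatou)).exists
  rw [← ofReal_integral_eq_lintegral_ofReal (hF n) (hF₀ n)] at hn
  exact ⟨n, (ENNReal.ofReal_lt_ofReal_iff'.1 hn).1⟩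

lemma ofReal_lt_lintegral_ofReal {h : Ω → ℝ} {c : ℝ} (hc : 0 ≤ c)
    (hmeas : AEStronglyMeasurable h μ) (h₀ : 0 ≤ᵐ[μ] h)
    (hlt : Integrable h μ → c < ∫ x, h x ∂μ) :
    ENNReal.ofReal c < ∫⁻ x, ENNReal.ofReal (h x) ∂μ := by
  by_cases hint : Integrable h μ
  · rw [← ofReal_integral_eq_lintegral_ofReal hint h₀]
    exact ENNReal.ofReal_lt_ofReal_iff'.2 ⟨hlt hint, hc.trans_lt (hlt hint)⟩
  · have htop : ∫⁻ x, ENNReal.ofReal (h x) ∂μ = ⊤ := by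
      by_contra hne
      exact hint ⟨hmeas, (hasFiniteIntegral_iff_ofReal h₀).2 (lt_top_iff_ne_top.2 hne)⟩
    rw [htop]
    exact ENNReal.ofReal_lt_top

variable [IsProbabilityMeasure μ] {a : Ω → ℝ}

lemma not_ae_eq_const_of_lt_integral {c : ℝ} (h : c < ∫ x, a x ∂μ ∨ ¬ Integrable a μ) :
    ¬ ∀ᵐ x ∂μ, a x = c := by
  intro hc
  have hae : a =ᵐ[μ] fun _ => c := hc
  rcases h with h | h
  · simp [integral_congr_ae hae] at h
  · exact h ((integrable_const c).congr hae.symm)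

lemma lt_integral_sub_div_add {u C : ℝ} (hu : 0 < u) (hE : u < ∫ x, a x ∂μ ∨ ¬ Integrable a μ)
    (hint : Integrable (fun x => (a x - u) / u + C) μ) : C < ∫ x, (a x - u) / u + C ∂μ := by
  have ha : Integrable a μ := by
    have : Integrable (fun x => ((a x - u) / u + C - C) * u + u) μ :=
      ((hint.sub (integrable_const C)).mul_const u).add (integrable_const u)
    refine this.congr (ae_of_all _ fun x => ?_)
    field_simp
    ring
  have hE' := hE.resolve_right (not_not.2 ha)
  have hau : Integrable (fun x => (a x - u) / u) μ := (ha.sub (integrable_const u)).div_const u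
  rw [integral_add hau (integrable_const C), integral_div, integral_sub ha (integrable_const u)]
  simp only [integral_const, probReal_univ, one_smul]
  have : 0 < (∫ x, a x ∂μ - u) / u := div_pos (by linarith) hu
  linarith

end Measure

lemma one_lt_ofReal_sub_mul {H : ℝ≥0∞} {ξ u : ℝ} (hH : H ≠ 0) (h : ξ + H⁻¹.toReal < u) :
    1 < ENNReal.ofReal (u - ξ) * H := by
  have : H⁻¹ < ENNReal.ofReal (u - ξ) :=
    (ENNReal.lt_ofReal_iff_toReal_lt (ENNReal.inv_ne_top.2 hH)).2 (by linarith)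
  rwa [← one_div, ENNReal.div_lt_iff (Or.inl hH) (Or.inr ENNReal.one_ne_top)] at this

lemma half_mul_one_div_add_one_mem_Ioc {T : ℝ} (hT : 0 < T) (n : ℕ) :
    T / 2 * (1 / ((n : ℝ) + 1)) ∈ Ioc 0 (T / 2) := by
  have : 1 / ((n : ℝ) + 1) ≤ 1 := by
    rw [div_le_one (by positivity)]
    linarith [n.cast_nonneg (α := ℝ)]
  exact ⟨by positivity, mul_le_of_le_one_right (by positivity) this⟩

namespace RootOfW

section Integrand

variable {ξ u T t A : ℝ}

lemma den_eq (hT : (u - ξ) * T = u) :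
    A * t - u * t + u = t * (A - ξ) + (u - ξ) * (T - t) := by
  linear_combination (-1 : ℝ) * hT

lemma sub_mul_sub_le_den (hT : (u - ξ) * T = u) (hA : ξ ≤ A) (ht : 0 ≤ t) :
    (u - ξ) * (T - t) ≤ A * t - u * t + u := by
  rw [den_eq hT]
  nlinarith

lemma den_pos (hξu : ξ < u) (hT : (u - ξ) * T = u) (hA : ξ ≤ A) (ht : 0 ≤ t) (htT : t < T) :
    0 < A * t - u * t + u :=
  (mul_pos (sub_pos.2 hξu) (sub_pos.2 htT)).trans_le (sub_mul_sub_le_den hT hA ht)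

lemma integrand_eq (ht : t ≠ 0) (hd : A * t - u * t + u ≠ 0) :
    (A - u) / (A * t - u * t + u) = (1 - u / (A * t - u * t + u)) / t := by
  rw [one_sub_div hd, div_div, div_eq_div_iff hd (mul_ne_zero hd ht)]
  ring

lemma integrand_le_inv (hu : 0 ≤ u) (ht : 0 < t) (hd : 0 < A * t - u * t + u) :
    (A - u) / (A * t - u * t + u) ≤ t⁻¹ := by
  rw [integrand_eq ht.ne' hd.ne', ← one_div]
  gcongr
  linarith [div_nonneg hu hd.le]

lemma neg_inv_sub_le_integrand (hξu : ξ < u) (hT : (u - ξ) * T = u) (hA : ξ ≤ A) (ht : 0 ≤ t)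
    (htT : t < T) : -(T - t)⁻¹ ≤ (A - u) / (A * t - u * t + u) := by
  have hTt : 0 < (u - ξ) * (T - t) := mul_pos (by linarith) (by linarith)
  rw [neg_le, ← neg_div, neg_sub]
  calc (u - A) / (A * t - u * t + u) ≤ (u - ξ) / ((u - ξ) * (T - t)) :=
        div_le_div₀ (by linarith) (by linarith) hTt (sub_mul_sub_le_den hT hA ht)
    _ = (T - t)⁻¹ := by field_simp [(sub_pos.2 hξu).ne']

lemma abs_integrand_le (hξu : ξ < u) (hT : (u - ξ) * T = u) (hA : ξ ≤ A) (ht : 0 < t)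
    (htT : t < T) : |(A - u) / (A * t - u * t + u)| ≤ t⁻¹ + (T - t)⁻¹ := by
  have hu : 0 ≤ u := by rw [← hT]; exact mul_nonneg (by linarith) (by linarith)
  have h₁ := integrand_le_inv hu ht (den_pos hξu hT hA ht.le htT)
  have h₂ := neg_inv_sub_le_integrand hξu hT hA ht.le htT
  have : 0 < t⁻¹ := inv_pos.2 ht
  have : 0 < (T - t)⁻¹ := inv_pos.2 (by linarith)
  rw [abs_le]
  constructor <;> linarith

lemma integrand_sub_integrand {s : ℝ} (hs : A * s - u * s + u ≠ 0)
    (ht : A * t - u * t + u ≠ 0) :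
    (A - u) / (A * s - u * s + u) - (A - u) / (A * t - u * t + u)
      = (A - u) ^ 2 * (t - s) / ((A * s - u * s + u) * (A * t - u * t + u)) := by
  rw [div_sub_div _ _ hs ht]
  ring

lemma integrand_anti {s : ℝ} (hξu : ξ < u) (hT : (u - ξ) * T = u) (hA : ξ ≤ A) (hs : 0 ≤ s)
    (hst : s ≤ t) (htT : t < T) :
    (A - u) / (A * t - u * t + u) ≤ (A - u) / (A * s - u * s + u) := by
  have hds := den_pos hξu hT hA hs (hst.trans_lt htT)
  have hdt := den_pos hξu hT hA (hs.trans hst) htT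
  rw [← sub_nonneg, integrand_sub_integrand hds.ne' hdt.ne']
  have : 0 ≤ t - s := by linarith
  positivity

lemma integrand_strictAnti {s : ℝ} (hξu : ξ < u) (hT : (u - ξ) * T = u) (hA : ξ ≤ A)
    (hAu : A ≠ u) (hs : 0 ≤ s) (hst : s < t) (htT : t < T) :
    (A - u) / (A * t - u * t + u) < (A - u) / (A * s - u * s + u) := by
  have hds := den_pos hξu hT hA hs (hst.trans htT)
  have hdt := den_pos hξu hT hA (hs.trans hst.le) htT
  rw [← sub_pos, integrand_sub_integrand hds.ne' hdt.ne']
  have : 0 < (A - u) ^ 2 := by positivity [sub_ne_zero.2 hAu]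
  have : 0 < t - s := by linarith
  positivity

end Integrand

/-- `w μ a u` is the paper's `w_u`. -/
noncomputable def w {Ω : Type*} [MeasurableSpace Ω] (μ : Measure Ω) (a : Ω → ℝ) (u t : ℝ) : ℝ :=
  ∫ x, (a x - u) / (a x * t - u * t + u) ∂μ

variable {Ω : Type*} [MeasurableSpace Ω] {μ : Measure Ω} {a : Ω → ℝ} {ξ u T : ℝ}

lemma integrable_integrand [IsFiniteMeasure μ] (hmeas : Measurable a)
    (hge : ∀ᵐ x ∂μ, ξ ≤ a x) (hξu : ξ < u) (hT : (u - ξ) * T = u) {t : ℝ} (ht : t ∈ Ioo 0 T) :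
    Integrable (fun x => (a x - u) / (a x * t - u * t + u)) μ := by
  refine Integrable.mono' (integrable_const (t⁻¹ + (T - t)⁻¹))
    (Measurable.aestronglyMeasurable (by fun_prop)) ?_
  filter_upwards [hge] with x hx
  exact abs_integrand_le hξu hT hx ht.1 ht.2

lemma strictAntiOn_w [IsFiniteMeasure μ] (hmeas : Measurable a) (hge : ∀ᵐ x ∂μ, ξ ≤ a x)
    (hξu : ξ < u) (hT : (u - ξ) * T = u) (hne : ¬ ∀ᵐ x ∂μ, a x = u) :
    StrictAntiOn (w μ a u) (Ioo 0 T) := by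
  intro s hs t ht hst
  refine integral_lt_integral_of_ae_le_of_measure_setOf_lt_ne_zero
    (integrable_integrand hmeas hge hξu hT ht) (integrable_integrand hmeas hge hξu hT hs) ?_ ?_
  · filter_upwards [hge] with x hx
    exact integrand_anti hξu hT hx hs.1.le hst.le ht.2
  · refine fun h => hne ?_
    filter_upwards [hge, measure_eq_zero_iff_ae_notMem.1 h] with x hx hlt
    by_contra hxu
    exact hlt (integrand_strictAnti hξu hT hx hxu hs.1.le hst ht.2)

lemma continuousOn_w [IsFiniteMeasure μ] (hmeas : Measurable a) (hge : ∀ᵐ x ∂μ, ξ ≤ a x)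
    (hξu : ξ < u) (hT : (u - ξ) * T = u) : ContinuousOn (w μ a u) (Ioo 0 T) := by
  intro t₀ ht₀
  have hnhds : Ioo (t₀ / 2) ((t₀ + T) / 2) ∈ 𝓝 t₀ :=
    Ioo_mem_nhds (by linarith [ht₀.1]) (by linarith [ht₀.2])
  refine ContinuousAt.continuousWithinAt <|
    continuousAt_of_dominated (bound := fun _ => (t₀ / 2)⁻¹ + (T - (t₀ + T) / 2)⁻¹)
      (Eventually.of_forall fun t => Measurable.aestronglyMeasurable (by fun_prop)) ?_
      (integrable_const _) ?_
  · filter_upwards [hnhds] with t ht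
    filter_upwards [hge] with x hx
    calc _ ≤ t⁻¹ + (T - t)⁻¹ :=
          abs_integrand_le hξu hT hx (by linarith [ht₀.1, ht.1]) (by linarith [ht.2, ht₀.2])
      _ ≤ _ := by gcongr <;> linarith [ht₀.1, ht₀.2, ht.1, ht.2]
  · filter_upwards [hge] with x hx
    exact continuousAt_const.div (by fun_prop) (den_pos hξu hT hx ht₀.1.le ht₀.2).ne'

lemma lintegral_ofReal_inv_sub_ne_zero (hmeas : Measurable a) (hge : ∀ᵐ x ∂μ, ξ ≤ a x)
    (hne : ¬ ∀ᵐ x ∂μ, a x = ξ) : ∫⁻ x, ENNReal.ofReal ((a x - ξ)⁻¹) ∂μ ≠ 0 := by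
  rw [Ne, lintegral_eq_zero_iff (by fun_prop)]
  refine fun h => hne ?_
  filter_upwards [hge, h] with x hx h0
  have : (a x - ξ)⁻¹ ≤ 0 := ENNReal.ofReal_eq_zero.1 h0
  linarith [inv_nonpos.1 this]

variable [IsProbabilityMeasure μ]

lemma exists_w_pos (hmeas : Measurable a) (hge : ∀ᵐ x ∂μ, ξ ≤ a x) (hξu : ξ < u) (hu : 0 < u)
    (hT : (u - ξ) * T = u) (hE : u < ∫ x, a x ∂μ ∨ ¬ Integrable a μ) :
    ∃ t ∈ Ioo 0 T, 0 < w μ a u t := by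
  have hT₀ : 0 < T := pos_of_mul_pos_right (by rw [hT]; exact hu) (sub_pos.2 hξu).le
  set t : ℕ → ℝ := fun n => T / 2 * (1 / ((n : ℝ) + 1))
  have ht : ∀ n, t n ∈ Ioc 0 (T / 2) := half_mul_one_div_add_one_mem_Ioc hT₀
  have ht' : ∀ n, t n ∈ Ioo 0 T := fun n => ⟨(ht n).1, by linarith [(ht n).2]⟩
  have htlim : Tendsto t atTop (𝓝 0) := by
    simpa only [mul_zero] using tendsto_one_div_add_atTop_nhds_zero_nat.const_mul (T / 2)
  set C := (T / 2)⁻¹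
  set F : ℕ → Ω → ℝ := fun n x => (a x - u) / (a x * t n - u * t n + u) + C
  have hF₀ : ∀ n, 0 ≤ᵐ[μ] F n := fun n => by
    filter_upwards [hge] with x hx
    have := neg_inv_sub_le_integrand hξu hT hx (ht n).1.le (ht' n).2
    have : (T - t n)⁻¹ ≤ C := inv_anti₀ (by positivity) (by linarith [(ht n).2])
    simp only [F, Pi.zero_apply]
    linarith
  have hlim : ∀ x, Tendsto (fun n => F n x) atTop (𝓝 ((a x - u) / u + C)) := fun x => by
    have : ContinuousAt (fun s => (a x - u) / (a x * s - u * s + u)) 0 :=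
      continuousAt_const.div (by fun_prop) (by simp [hu.ne'])
    simpa using (this.tendsto.comp htlim).add_const C
  have hlim₀ : 0 ≤ᵐ[μ] fun x => (a x - u) / u + C := by
    filter_upwards [ae_all_iff.2 hF₀] with x hx using ge_of_tendsto' (hlim x) hx
  obtain ⟨n, hn⟩ := exists_lt_integral_of_le_liminf (F := F) (c := C)
    (fun n => (integrable_integrand hmeas hge hξu hT (ht' n)).add (integrable_const C)) hF₀
    (ae_of_all _ fun x => le_liminf_ofReal_of_tendsto (hlim x))
    (ofReal_lt_lintegral_ofReal (by positivity) (Measurable.aestronglyMeasurable (by fun_prop))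
      hlim₀ (lt_integral_sub_div_add hu hE))
  refine ⟨t n, ht' n, ?_⟩
  rw [integral_add (integrable_integrand hmeas hge hξu hT (ht' n)) (integrable_const C)] at hn
  simp only [integral_const, probReal_univ, one_smul] at hn
  rw [w]
  linarith

lemma exists_w_neg (hmeas : Measurable a) (hge : ∀ᵐ x ∂μ, ξ ≤ a x) (hξu : ξ < u) (hu : 0 < u)
    (hT : (u - ξ) * T = u)
    (hH : 1 < ENNReal.ofReal (u - ξ) * ∫⁻ x, ENNReal.ofReal ((a x - ξ)⁻¹) ∂μ) :
    ∃ t ∈ Ioo 0 T, w μ a u t < 0 := by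
  have hT₀ : 0 < T := pos_of_mul_pos_right (by rw [hT]; exact hu) (sub_pos.2 hξu).le
  set t : ℕ → ℝ := fun n => T - T / 2 * (1 / ((n : ℝ) + 1))
  have ht : ∀ n, t n ∈ Ioo 0 T := fun n => by
    have := half_mul_one_div_add_one_mem_Ioc hT₀ n
    exact ⟨by simp only [t]; linarith [this.2], by simp only [t]; linarith [this.1]⟩
  have htlim : Tendsto t atTop (𝓝 T) := by
    simpa only [mul_zero, sub_zero] using
      tendsto_const_nhds (x := T) |>.sub (tendsto_one_div_add_atTop_nhds_zero_nat.const_mul (T / 2))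
  set F : ℕ → Ω → ℝ := fun n x => u / (a x * t n - u * t n + u)
  have hF₀ : ∀ n, 0 ≤ᵐ[μ] F n := fun n => by
    filter_upwards [hge] with x hx
    exact div_nonneg hu.le (den_pos hξu hT hx (ht n).1.le (ht n).2).le
  have hF : ∀ n, Integrable (F n) μ := fun n => by
    refine Integrable.mono' (integrable_const (u / ((u - ξ) * (T - t n))))
      (Measurable.aestronglyMeasurable (by fun_prop)) ?_
    filter_upwards [hge] with x hx
    have hd := den_pos hξu hT hx (ht n).1.le (ht n).2
    rw [Real.norm_eq_abs, abs_of_nonneg (div_nonneg hu.le hd.le)]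
    exact div_le_div_of_nonneg_left hu.le (mul_pos (by linarith) (by linarith [(ht n).2]))
      (sub_mul_sub_le_den hT hx (ht n).1.le)
  have hG : ∀ᵐ x ∂μ, ENNReal.ofReal (u - ξ) * ENNReal.ofReal ((a x - ξ)⁻¹)
      ≤ liminf (fun n => ENNReal.ofReal (F n x)) atTop := by
    filter_upwards [hge] with x hx
    rcases hx.eq_or_lt with hxξ | hxξ
    -- on the atom `a x = ξ`, where `u / d_t` blows up, `0⁻¹ = 0` makes the bound trivial
    · simp [← hxξ]
    · have hd : a x * T - u * T + u = T * (a x - ξ) := by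
        rw [den_eq hT, sub_self, mul_zero, add_zero]
      have hcont : ContinuousAt (fun s => u / (a x * s - u * s + u)) T :=
        continuousAt_const.div (by fun_prop) (by rw [hd]; exact (mul_pos hT₀ (sub_pos.2 hxξ)).ne')
      have hlim : Tendsto (fun n => F n x) atTop (𝓝 (u / (a x * T - u * T + u))) :=
        hcont.tendsto.comp htlim
      have hval : u / (a x * T - u * T + u) = (u - ξ) * (a x - ξ)⁻¹ := by
        rw [hd]
        field_simp
        linear_combination (-1 : ℝ) * hT
      rw [hval] at hlim
      rw [← ENNReal.ofReal_mul (sub_pos.2 hξu).le]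
      exact le_liminf_ofReal_of_tendsto hlim
  have hc : ENNReal.ofReal 1 < ∫⁻ x, ENNReal.ofReal (u - ξ) * ENNReal.ofReal ((a x - ξ)⁻¹) ∂μ := by
    rwa [lintegral_const_mul' _ _ ENNReal.ofReal_ne_top, ENNReal.ofReal_one]
  obtain ⟨n, hn⟩ := exists_lt_integral_of_le_liminf hF hF₀ hG hc
  refine ⟨t n, ht n, ?_⟩
  have hw : w μ a u (t n) = (1 - ∫ x, F n x ∂μ) / t n := by
    have : ∀ᵐ x ∂μ, (a x - u) / (a x * t n - u * t n + u) = (1 - F n x) / t n := by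
      filter_upwards [hge] with x hx
      exact integrand_eq (ht n).1.ne' (den_pos hξu hT hx (ht n).1.le (ht n).2).ne'
    rw [w, integral_congr_ae this, integral_div, integral_sub (integrable_const 1) (hF n)]
    simp
  rw [hw]
  exact div_neg_of_neg_of_pos (by linarith) (ht n).1

end RootOfW

open RootOfW in
theorem stmt5_general {Ω : Type*} [MeasurableSpace Ω] (μ : Measure Ω) [IsProbabilityMeasure μ]
    (a : Ω → ℝ) (hmeas : Measurable a) (ξ : ℝ)
    (hge : ∀ᵐ x ∂μ, ξ ≤ a x)
    (u : ℝ)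
    (hu : max 0 (ξ + (∫⁻ x, ENNReal.ofReal ((a x - ξ)⁻¹) ∂μ)⁻¹.toReal) < u)
    (huE : u < ∫ x, a x ∂μ ∨ ¬ Integrable a μ) :
    ∃! t : ℝ, t ∈ Ioo 0 (u / (u - ξ)) ∧
      ∫ x, (a x - u) / (a x * t - u * t + u) ∂μ = 0 := by
  have hu₀ : 0 < u := (le_max_left _ _).trans_lt hu
  have huH := (le_max_right _ _).trans_lt hu
  have hξu : ξ < u := (le_add_of_nonneg_right ENNReal.toReal_nonneg).trans_lt huH
  have hT : (u - ξ) * (u / (u - ξ)) = u := mul_div_cancel₀ u (sub_pos.2 hξu).ne'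
  have hH : ∫⁻ x, ENNReal.ofReal ((a x - ξ)⁻¹) ∂μ ≠ 0 :=
    lintegral_ofReal_inv_sub_ne_zero hmeas hge
      (not_ae_eq_const_of_lt_integral (huE.imp_left hξu.trans))
  obtain ⟨t₁, ht₁, hpos⟩ := exists_w_pos hmeas hge hξu hu₀ hT huE
  obtain ⟨t₂, ht₂, hneg⟩ := exists_w_neg hmeas hge hξu hu₀ hT (one_lt_ofReal_sub_mul hH huH)
  obtain ⟨t, ht, hzero⟩ := isPreconnected_Ioo.intermediate_value ht₂ ht₁
    (continuousOn_w hmeas hge hξu hT) ⟨hneg.le, hpos.le⟩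
  refine ⟨t, ⟨ht, hzero⟩, fun s ⟨hs, hszero⟩ => ?_⟩
  exact (strictAntiOn_w hmeas hge hξu hT (not_ae_eq_const_of_lt_integral huE)).injOn hs ht
    (hszero.trans hzero.symm)

/-- If `max(0, ξ + 1/H_ξ) < u < E` (with the convention `1/H_ξ = 0` when
`H_ξ = ∫ 1/(a-ξ) dF = +∞`), then `w_u(t) = ∫ (a-u)/(a t - u t + u) dF = 0`
has a unique solution in `(0, u/(u-ξ))`. -/
theorem stmt5 {Ω : Type*} [MeasurableSpace Ω] (μ : Measure Ω) [IsProbabilityMeasure μ]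
    (a : Ω → ℝ) (hmeas : Measurable a) (ξ : ℝ)
    (hge : ∀ᵐ x ∂μ, ξ ≤ a x)
    (hinf : ∀ ε > 0, 0 < μ {x | a x < ξ + ε})
    (hnc : ∃ δ > 0, μ {x | a x < ξ + δ} < 1)
    (u : ℝ)
    (hu : max 0 (ξ + (∫⁻ x, ENNReal.ofReal ((a x - ξ)⁻¹) ∂μ)⁻¹.toReal) < u)
    (huE : u < ∫ x, a x ∂μ ∨ ¬ Integrable a μ) :
    ∃! t : ℝ, t ∈ Ioo 0 (u / (u - ξ)) ∧
      ∫ x, (a x - u) / (a x * t - u * t + u) ∂μ = 0 :=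
  stmt5_general μ a hmeas ξ hge u hu huE
end

section
/- Suppose ξ ≥ 0 and max(0, ξ+1/H_ξ) < u < E, and let t̃_u ∈ (0, u/(u-ξ)) be the unique solution of ∫ (a-u)/(a t̃_u - u t̃_u + u) dF = 0. Then t̃_u is strictly decreasing as a function of u on (ξ+1/H_ξ, E). -/
/-!
Fix `u₁ < u₂` and suppose `t̃_{u₁} ≤ t̃_{u₂}`. For `a ≥ 0` the integrand of `w_u(t)` is
antitone in `t` and in `u`, so `0 = w_{u₂}(t̃_{u₂}) ≤ w_{u₁}(t̃_{u₂}) ≤ w_{u₁}(t̃_{u₁}) = 0`.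
The integrands of the first inequality differ by `a (u₂ - u₁) / (D₁ D₂)`, so equality forces
`a = 0` a.e.; but then `w_u(t) = -1/(1 - t) ≠ 0`, so no root could exist.
-/

open MeasureTheory Real Filter Set

noncomputable def wIntegrand (u t y : ℝ) : ℝ := (y - u) / (y * t - u * t + u)

/-- The paper's `w_u(t)`. -/
noncomputable def wIntegral {Ω : Type*} [MeasurableSpace Ω] (μ : Measure Ω) (a : Ω → ℝ)
    (u t : ℝ) : ℝ :=
  ∫ x, wIntegrand u t (a x) ∂μ

section Pointwise

variable {ξ u t y : ℝ}

lemma sub_mul_add_pos_of_lt_div (hξu : ξ < u) (ht : t < u / (u - ξ)) :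
    0 < (ξ - u) * t + u := by
  have := (lt_div_iff₀ (sub_pos.2 hξu)).1 ht
  nlinarith

lemma sub_mul_add_le_mul_sub_mul_add (ht : 0 ≤ t) (hy : ξ ≤ y) :
    (ξ - u) * t + u ≤ y * t - u * t + u := by
  nlinarith

lemma mul_sub_mul_add_pos (hξu : ξ < u) (ht0 : 0 ≤ t) (ht : t < u / (u - ξ)) (hy : ξ ≤ y) :
    0 < y * t - u * t + u :=
  (sub_mul_add_pos_of_lt_div hξu ht).trans_le (sub_mul_add_le_mul_sub_mul_add ht0 hy)

lemma div_sub_le_div_sub_of_lt {u₁ u₂ : ℝ} (hξ0 : 0 ≤ ξ) (hξu : ξ < u₁) (hu : u₁ < u₂) :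
    u₂ / (u₂ - ξ) ≤ u₁ / (u₁ - ξ) := by
  rw [div_le_div_iff₀ (by linarith) (by linarith)]
  nlinarith

lemma wIntegrand_sub_wIntegrand {u₁ u₂ : ℝ} (h₁ : y * t - u₁ * t + u₁ ≠ 0)
    (h₂ : y * t - u₂ * t + u₂ ≠ 0) :
    wIntegrand u₁ t y - wIntegrand u₂ t y
      = y * (u₂ - u₁) / ((y * t - u₁ * t + u₁) * (y * t - u₂ * t + u₂)) := by
  rw [wIntegrand, wIntegrand, div_sub_div _ _ h₁ h₂]
  congr 1
  ring

lemma wIntegrand_le_of_le {t₁ t₂ : ℝ} (ht : t₁ ≤ t₂) (h₁ : 0 < y * t₁ - u * t₁ + u)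
    (h₂ : 0 < y * t₂ - u * t₂ + u) :
    wIntegrand u t₂ y ≤ wIntegrand u t₁ y := by
  unfold wIntegrand
  rw [div_le_div_iff₀ h₂ h₁]
  nlinarith [mul_nonneg (sq_nonneg (y - u)) (sub_nonneg.2 ht)]

end Pointwise

section Integral

variable {Ω : Type*} [MeasurableSpace Ω] {μ : Measure Ω} [IsProbabilityMeasure μ]
  {a : Ω → ℝ} {ξ u t : ℝ}

-- `(y - u) / D = 1/t - u / (t D)` and `D ≥ (ξ - u) t + u > 0` give a uniform bound.
lemma integrable_wIntegrand (hmeas : Measurable a) (hge : ∀ᵐ x ∂μ, ξ ≤ a x) (hξu : ξ < u)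
    (ht0 : 0 < t) (ht : t < u / (u - ξ)) :
    Integrable (fun x => wIntegrand u t (a x)) μ := by
  set c := (ξ - u) * t + u
  have hc : 0 < c := sub_mul_add_pos_of_lt_div hξu ht
  have hmeas' : Measurable fun x => wIntegrand u t (a x) :=
    (hmeas.sub_const u).div (((hmeas.mul_const t).sub_const (u * t)).add_const u)
  refine Integrable.of_bound hmeas'.aestronglyMeasurable (1 / t + |u| / (t * c)) ?_
  filter_upwards [hge] with x hx
  have hcD : c ≤ a x * t - u * t + u := sub_mul_add_le_mul_sub_mul_add ht0.le hx
  have hD : 0 < a x * t - u * t + u := hc.trans_le hcD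
  have hsplit : wIntegrand u t (a x) = 1 / t - u / (t * (a x * t - u * t + u)) := by
    rw [wIntegrand, eq_sub_iff_add_eq, div_add_div _ _ hD.ne' (by positivity),
      div_eq_div_iff (by positivity) ht0.ne']
    ring
  have hu : |u / (t * (a x * t - u * t + u))| ≤ |u| / (t * c) := by
    rw [abs_div, abs_of_pos (mul_pos ht0 hD)]
    gcongr
  calc ‖wIntegrand u t (a x)‖ ≤ |1 / t| + |u / (t * (a x * t - u * t + u))| := by
        rw [Real.norm_eq_abs, hsplit]; exact abs_sub _ _
    _ ≤ 1 / t + |u| / (t * c) := by rw [abs_of_pos (by positivity)]; linarith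

lemma wIntegral_le_of_le (hmeas : Measurable a) (hge : ∀ᵐ x ∂μ, ξ ≤ a x) (hξu : ξ < u)
    {t₁ t₂ : ℝ} (ht₁ : 0 < t₁) (ht : t₁ ≤ t₂) (ht₂ : t₂ < u / (u - ξ)) :
    wIntegral μ a u t₂ ≤ wIntegral μ a u t₁ := by
  refine integral_mono_ae
    (integrable_wIntegrand hmeas hge hξu (ht₁.trans_le ht) ht₂)
    (integrable_wIntegrand hmeas hge hξu ht₁ (ht.trans_lt ht₂)) ?_
  filter_upwards [hge] with x hx
  exact wIntegrand_le_of_le ht (mul_sub_mul_add_pos hξu ht₁.le (ht.trans_lt ht₂) hx)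
    (mul_sub_mul_add_pos hξu (ht₁.le.trans ht) ht₂ hx)

lemma wIntegral_lt_of_lt (hmeas : Measurable a) (hξ0 : 0 ≤ ξ) (hge : ∀ᵐ x ∂μ, ξ ≤ a x)
    (ha : ¬ a =ᵐ[μ] 0) {u₁ u₂ : ℝ} (hξu : ξ < u₁) (hu : u₁ < u₂) (ht0 : 0 < t)
    (ht : t < u₂ / (u₂ - ξ)) :
    wIntegral μ a u₂ t < wIntegral μ a u₁ t := by
  have ht₁ : t < u₁ / (u₁ - ξ) := ht.trans_le (div_sub_le_div_sub_of_lt hξ0 hξu hu)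
  have hI₁ := integrable_wIntegrand hmeas hge hξu ht0 ht₁
  have hI₂ := integrable_wIntegrand hmeas hge (hξu.trans hu) ht0 ht
  have hdiff : ∀ᵐ x ∂μ, wIntegrand u₁ t (a x) - wIntegrand u₂ t (a x)
      = a x * (u₂ - u₁) / ((a x * t - u₁ * t + u₁) * (a x * t - u₂ * t + u₂)) ∧
      0 < (a x * t - u₁ * t + u₁) * (a x * t - u₂ * t + u₂) ∧ 0 ≤ a x := by
    filter_upwards [hge] with x hx
    have h₁ := mul_sub_mul_add_pos hξu ht0.le ht₁ hx
    have h₂ := mul_sub_mul_add_pos (hξu.trans hu) ht0.le ht hx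
    exact ⟨wIntegrand_sub_wIntegrand h₁.ne' h₂.ne', mul_pos h₁ h₂, hξ0.trans hx⟩
  have hnonneg : 0 ≤ᵐ[μ] fun x => wIntegrand u₁ t (a x) - wIntegrand u₂ t (a x) := by
    filter_upwards [hdiff] with x ⟨heq, hD, hx⟩
    rw [Pi.zero_apply, heq]
    have := sub_pos.2 hu
    positivity
  refine lt_of_le_of_ne (integral_mono_ae hI₂ hI₁ (hnonneg.mono fun x hx => sub_nonneg.1 hx)) ?_
  intro hEq
  have hzero := (integral_eq_zero_iff_of_nonneg_ae hnonneg (hI₁.sub hI₂)).1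
    (by rw [integral_sub hI₁ hI₂]; exact sub_eq_zero.2 (hEq.symm))
  refine ha ?_
  filter_upwards [hzero, hdiff] with x hx ⟨heq, hD, _⟩
  rw [Pi.zero_apply, heq, div_eq_zero_iff] at hx
  simpa [sub_eq_zero, hu.ne', hD.ne'] using hx

-- If `a = 0` a.e. then `ξ ≤ 0`, so `t < 1` and `w_u(t) = -1/(1 - t)`.
lemma not_ae_eq_zero_of_wIntegral_eq_zero (hge : ∀ᵐ x ∂μ, ξ ≤ a x) (hu : 0 < u)
    (ht : t < u / (u - ξ)) (hw : wIntegral μ a u t = 0) : ¬ a =ᵐ[μ] 0 := by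
  intro ha
  obtain ⟨x, hξx, hx⟩ := (hge.and ha).exists
  have hξ : ξ ≤ 0 := hξx.trans_eq hx
  have ht1 : t < 1 := ht.trans_le ((div_le_one (by linarith)).2 (by linarith))
  have hconst : wIntegral μ a u t = -u / (u - u * t) := by
    have hpt : ∀ᵐ x ∂μ, wIntegrand u t (a x) = -u / (u - u * t) :=
      ha.mono fun x hx => by rw [wIntegrand, hx, Pi.zero_apply]; ring
    rw [wIntegral, integral_congr_ae hpt, integral_const, probReal_univ, one_smul]
  have : -u / (u - u * t) < 0 :=
    div_neg_of_neg_of_pos (neg_neg_of_pos hu) (by nlinarith)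
  linarith

end Integral

theorem stmt7_general {Ω : Type*} [MeasurableSpace Ω] (μ : Measure Ω) [IsProbabilityMeasure μ]
    (a : Ω → ℝ) (hmeas : Measurable a) (ξ : ℝ) (hξ0 : 0 ≤ ξ)
    (hge : ∀ᵐ x ∂μ, ξ ≤ a x)
    (T : ℝ → ℝ)
    (hT : ∀ u,
      max 0 (ξ + (∫⁻ x, ENNReal.ofReal ((a x - ξ)⁻¹) ∂μ)⁻¹.toReal) < u →
      (u < ∫ x, a x ∂μ ∨ ¬ Integrable a μ) →
      T u ∈ Ioo 0 (u / (u - ξ)) ∧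
        ∫ x, (a x - u) / (a x * T u - u * T u + u) ∂μ = 0) :
    StrictAntiOn T
      {u : ℝ | max 0 (ξ + (∫⁻ x, ENNReal.ofReal ((a x - ξ)⁻¹) ∂μ)⁻¹.toReal) < u ∧
        (u < ∫ x, a x ∂μ ∨ ¬ Integrable a μ)} := by
  intro u₁ ⟨hu₁, hE₁⟩ u₂ ⟨hu₂, hE₂⟩ h12
  obtain ⟨⟨ht₁0, ht₁⟩, hw₁⟩ := hT u₁ hu₁ hE₁
  obtain ⟨⟨ht₂0, ht₂⟩, hw₂⟩ := hT u₂ hu₂ hE₂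
  have hξu₁ : ξ < u₁ :=
    (le_add_of_nonneg_right ENNReal.toReal_nonneg).trans_lt (max_lt_iff.1 hu₁).2
  by_contra! hle
  have ha : ¬ a =ᵐ[μ] 0 :=
    not_ae_eq_zero_of_wIntegral_eq_zero hge (max_lt_iff.1 hu₂).1 ht₂ hw₂
  have hlt : wIntegral μ a u₂ (T u₂) < wIntegral μ a u₁ (T u₁) :=
    (wIntegral_lt_of_lt hmeas hξ0 hge ha hξu₁ h12 ht₂0 ht₂).trans_le
      (wIntegral_le_of_le hmeas hge hξu₁ ht₁0 hle
        (ht₂.trans_le (div_sub_le_div_sub_of_lt hξ0 hξu₁ h12)))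
  exact hlt.ne (hw₂.trans hw₁.symm)

/-- Suppose `ξ ≥ 0`, and let `T u = t̃_u ∈ (0, u/(u-ξ))` be the unique zero of
`w_u(t) = ∫ (a-u)/(a t - u t + u) dF` for `u` with
`max(0, ξ + 1/H_ξ) < u < E`. Then `u ↦ t̃_u` is strictly decreasing there. -/
theorem stmt7 {Ω : Type*} [MeasurableSpace Ω] (μ : Measure Ω) [IsProbabilityMeasure μ]
    (a : Ω → ℝ) (hmeas : Measurable a) (ξ : ℝ) (hξ0 : 0 ≤ ξ)
    (hge : ∀ᵐ x ∂μ, ξ ≤ a x)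
    (hinf : ∀ ε > 0, 0 < μ {x | a x < ξ + ε})
    (hnc : ∃ δ > 0, μ {x | a x < ξ + δ} < 1)
    (T : ℝ → ℝ)
    (hT : ∀ u,
      max 0 (ξ + (∫⁻ x, ENNReal.ofReal ((a x - ξ)⁻¹) ∂μ)⁻¹.toReal) < u →
      (u < ∫ x, a x ∂μ ∨ ¬ Integrable a μ) →
      T u ∈ Ioo 0 (u / (u - ξ)) ∧
        ∫ x, (a x - u) / (a x * T u - u * T u + u) ∂μ = 0) :
    StrictAntiOn T
      {u : ℝ | max 0 (ξ + (∫⁻ x, ENNReal.ofReal ((a x - ξ)⁻¹) ∂μ)⁻¹.toReal) < u ∧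
        (u < ∫ x, a x ∂μ ∨ ¬ Integrable a μ)} :=
  stmt7_general μ a hmeas ξ hξ0 hge T hT
end

section
/- The following are equivalent: (1) ∫_{a(x)>1} log a(x) dF(x) < +∞; (2) G̃_u(t) = exp(∫ log(a t/u - t + 1) dF) < +∞ for every u ∈ (max(0,ξ), E) and t ∈ (0, u/(u-ξ)); (3) G̃_{u₁}(t₁) < +∞ for some such u₁, t₁. -/
open MeasureTheory Real Filter Set

/-!
Write `a t/u - t + 1 = c a + d` with `c = t/u > 0` and `d = 1 - t`. The constraint `t < u/(u - ξ)`
says exactly that this affine function is bounded below by `m = c ξ + d > 0` on the essential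
range of `a`. An affine function bounded below by a positive constant has, up to additive
constants, the same logarithm as `a` where `a` is large, and is bounded where `a ≤ 1`; so on a
probability space `log⁺(c a + d)` and `log⁺ a` are integrable together, whatever `(u, t)` is.
Hence (3) ⇒ (1) ⇒ (2), and (2) ⇒ (3) because an admissible pair exists: `max 0 ξ < E`, since
`a` is not a.e. equal to its essential infimum.
-/

lemma lintegral_lt_top_of_ae_le_add_const {Ω : Type*} [MeasurableSpace Ω] {μ : Measure Ω}
    [IsFiniteMeasure μ] {f g : Ω → ENNReal} {C : ENNReal} (hC : C ≠ ⊤)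
    (hfg : ∀ᵐ x ∂μ, f x ≤ g x + C) (hg : ∫⁻ x, g x ∂μ < ⊤) :
    ∫⁻ x, f x ∂μ < ⊤ :=
  calc ∫⁻ x, f x ∂μ ≤ ∫⁻ x, (g x + C) ∂μ := lintegral_mono_ae hfg
    _ = ∫⁻ x, g x ∂μ + C * μ univ := by rw [lintegral_add_right _ measurable_const, lintegral_const]
    _ < ⊤ := ENNReal.add_lt_top.2 ⟨hg, ENNReal.mul_lt_top hC.lt_top (measure_lt_top μ _)⟩

lemma log_le_log_mul_add_add {c d m y : ℝ} (hc : 0 < c) (hm : 0 < m) (hmy : m ≤ c * y + d)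
    (hy : 0 < y) : log y ≤ log (c * y + d) + log ((1 + |d| / m) / c) := by
  have hK : 0 < (1 + |d| / m) / c := by positivity
  rw [← log_mul (by linarith) hK.ne']
  refine log_le_log hy ?_
  have hd : |d| ≤ |d| / m * (c * y + d) := by
    calc |d| = |d| / m * m := by field_simp
      _ ≤ |d| / m * (c * y + d) := by gcongr
  rw [mul_div_assoc', le_div_iff₀ hc]
  nlinarith [neg_abs_le d]

lemma log_mul_add_le_log_max_one_add {c d y : ℝ} (hc : 0 < c) (hpos : 0 < c * y + d) :
    log (c * y + d) ≤ log (max y 1) + log (c + |d|) := by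
  have hy : 0 < max y 1 := lt_max_of_lt_right one_pos
  rw [← log_mul hy.ne' (by positivity)]
  refine log_le_log hpos ?_
  have hcy : c * y ≤ c * max y 1 := by gcongr; exact le_max_left _ _
  nlinarith [le_abs_self d, abs_nonneg d, le_max_right y 1]

lemma setLIntegral_one_lt_ofReal_log {Ω : Type*} [MeasurableSpace Ω] (μ : Measure Ω)
    {f : Ω → ℝ} (hf : Measurable f) :
    ∫⁻ x in {x | 1 < f x}, ENNReal.ofReal (log (f x)) ∂μ =
      ∫⁻ x, ENNReal.ofReal (log (max (f x) 1)) ∂μ := by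
  rw [← lintegral_indicator (measurableSet_lt measurable_const hf)]
  congr 1 with x
  by_cases hx : 1 < f x
  · simp [hx, max_eq_left hx.le]
  · simp [hx, max_eq_right (not_lt.1 hx)]

theorem lintegral_ofReal_log_mul_add_lt_top_iff {Ω : Type*} [MeasurableSpace Ω]
    {μ : Measure Ω} [IsFiniteMeasure μ] {f : Ω → ℝ} {ξ c d : ℝ} (hc : 0 < c)
    (hξ : 0 < c * ξ + d) (hf : ∀ᵐ x ∂μ, ξ ≤ f x) :
    ∫⁻ x, ENNReal.ofReal (log (c * f x + d)) ∂μ < ⊤ ↔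
      ∫⁻ x, ENNReal.ofReal (log (max (f x) 1)) ∂μ < ⊤ := by
  have hlow : ∀ᵐ x ∂μ, c * ξ + d ≤ c * f x + d := by
    filter_upwards [hf] with x hx
    gcongr
  constructor
  · refine lintegral_lt_top_of_ae_le_add_const
      (ENNReal.ofReal_ne_top (r := log ((1 + |d| / (c * ξ + d)) / c))) ?_
    filter_upwards [hlow] with x hx
    by_cases h1 : 1 < f x
    · rw [max_eq_left h1.le]
      exact (ENNReal.ofReal_le_ofReal (log_le_log_mul_add_add hc hξ hx (by linarith))).trans
        ENNReal.ofReal_add_le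
    · simp [max_eq_right (not_lt.1 h1)]
  · refine lintegral_lt_top_of_ae_le_add_const (ENNReal.ofReal_ne_top (r := log (c + |d|))) ?_
    filter_upwards [hlow] with x hx
    exact (ENNReal.ofReal_le_ofReal (log_mul_add_le_log_max_one_add hc (by linarith))).trans
      ENNReal.ofReal_add_le

lemma mul_div_sub_add_one_pos {ξ u t : ℝ} (hu : max 0 ξ < u) (ht : t ∈ Ioo 0 (u / (u - ξ))) :
    0 < ξ * t / u - t + 1 := by
  have hu0 : 0 < u := (le_max_left _ _).trans_lt hu
  have huξ : 0 < u - ξ := sub_pos.2 ((le_max_right _ _).trans_lt hu)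
  have htu : t * (u - ξ) < u := (lt_div_iff₀ huξ).1 ht.2
  have : ξ * t / u - t + 1 = (u - t * (u - ξ)) / u := by field_simp; ring
  rw [this]
  exact div_pos (by linarith) hu0

lemma lintegral_ofReal_log_lt_top_iff {Ω : Type*} [MeasurableSpace Ω] (μ : Measure Ω)
    [IsProbabilityMeasure μ] {a : Ω → ℝ} (hmeas : Measurable a) {ξ u t : ℝ}
    (hge : ∀ᵐ x ∂μ, ξ ≤ a x) (hu : max 0 ξ < u) (ht : t ∈ Ioo 0 (u / (u - ξ))) :
    ∫⁻ x, ENNReal.ofReal (log (a x * t / u - t + 1)) ∂μ < ⊤ ↔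
      ∫⁻ x in {x | 1 < a x}, ENNReal.ofReal (log (a x)) ∂μ < ⊤ := by
  have hc : 0 < t / u := div_pos ht.1 ((le_max_left _ _).trans_lt hu)
  have haffine : ∀ y, y * t / u - t + 1 = t / u * y + (1 - t) := fun y => by ring
  have hξ : 0 < t / u * ξ + (1 - t) := haffine ξ ▸ mul_div_sub_add_one_pos hu ht
  simp only [haffine]
  rw [setLIntegral_one_lt_ofReal_log μ hmeas]
  exact lintegral_ofReal_log_mul_add_lt_top_iff hc hξ hge

lemma lt_integral_of_measure_lt_lt_one {Ω : Type*} [MeasurableSpace Ω] {μ : Measure Ω}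
    [IsProbabilityMeasure μ] {a : Ω → ℝ} (hmeas : Measurable a) (hint : Integrable a μ) {ξ δ : ℝ}
    (hge : ∀ᵐ x ∂μ, ξ ≤ a x) (hδ : 0 < δ) (hlt : μ {x | a x < ξ + δ} < 1) :
    ξ < ∫ x, a x ∂μ := by
  have hnonneg : 0 ≤ᵐ[μ] fun x => a x - ξ := by
    filter_upwards [hge] with x hx
    simpa using hx
  have hsupp : {x | a x < ξ + δ}ᶜ ⊆ Function.support fun x => a x - ξ := fun x hx => by
    simp only [mem_compl_iff, mem_ofPred_eq, not_lt] at hx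
    simp only [Function.mem_support]
    linarith
  have hpos : 0 < μ {x | a x < ξ + δ}ᶜ := by
    rw [prob_compl_eq_one_sub (measurableSet_lt hmeas measurable_const)]
    exact tsub_pos_of_lt hlt
  have := (integral_pos_iff_support_of_nonneg_ae hnonneg (hint.sub (integrable_const ξ))).2
    (hpos.trans_le (measure_mono hsupp))
  rw [integral_sub hint (integrable_const ξ), integral_const, probReal_univ, one_smul] at this
  linarith

lemma exists_admissible {Ω : Type*} [MeasurableSpace Ω] (μ : Measure Ω) [IsProbabilityMeasure μ]
    {a : Ω → ℝ} (hmeas : Measurable a) {ξ : ℝ} (hge : ∀ᵐ x ∂μ, ξ ≤ a x)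
    (hnc : ∃ δ > 0, μ {x | a x < ξ + δ} < 1)
    (hEpos : 0 < ∫ x, a x ∂μ ∨ ¬ Integrable a μ) :
    ∃ u t : ℝ, max 0 ξ < u ∧ (u < ∫ x, a x ∂μ ∨ ¬ Integrable a μ) ∧
      t ∈ Ioo 0 (u / (u - ξ)) := by
  obtain ⟨u, hu, hE⟩ : ∃ u, max 0 ξ < u ∧ (u < ∫ x, a x ∂μ ∨ ¬ Integrable a μ) := by
    by_cases hint : Integrable a μ
    · obtain ⟨δ, hδ, hlt⟩ := hnc
      have hmax : max 0 ξ < ∫ x, a x ∂μ :=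
        max_lt (hEpos.resolve_right (not_not.2 hint))
          (lt_integral_of_measure_lt_lt_one hmeas hint hge hδ hlt)
      obtain ⟨u, hu, hE⟩ := exists_between hmax
      exact ⟨u, hu, Or.inl hE⟩
    · exact ⟨max 0 ξ + 1, lt_add_one _, Or.inr hint⟩
  have hr : 0 < u / (u - ξ) :=
    div_pos ((le_max_left _ _).trans_lt hu) (sub_pos.2 ((le_max_right _ _).trans_lt hu))
  exact ⟨u, u / (u - ξ) / 2, hu, hE, half_pos hr, half_lt_self hr⟩

theorem stmt13_general {Ω : Type*} [MeasurableSpace Ω] (μ : Measure Ω) [IsProbabilityMeasure μ]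
    (a : Ω → ℝ) (hmeas : Measurable a) (ξ : ℝ)
    (hge : ∀ᵐ x ∂μ, ξ ≤ a x)
    (hnc : ∃ δ > 0, μ {x | a x < ξ + δ} < 1)
    (hEpos : 0 < ∫ x, a x ∂μ ∨ ¬ Integrable a μ) :
    ((∫⁻ x in {x | 1 < a x}, ENNReal.ofReal (Real.log (a x)) ∂μ < ⊤) ↔
      (∀ u t : ℝ, max 0 ξ < u → (u < ∫ x, a x ∂μ ∨ ¬ Integrable a μ) →
        t ∈ Ioo 0 (u / (u - ξ)) →
        ∫⁻ x, ENNReal.ofReal (Real.log (a x * t / u - t + 1)) ∂μ < ⊤)) ∧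
    ((∀ u t : ℝ, max 0 ξ < u → (u < ∫ x, a x ∂μ ∨ ¬ Integrable a μ) →
        t ∈ Ioo 0 (u / (u - ξ)) →
        ∫⁻ x, ENNReal.ofReal (Real.log (a x * t / u - t + 1)) ∂μ < ⊤) ↔
      (∃ u t : ℝ, max 0 ξ < u ∧ (u < ∫ x, a x ∂μ ∨ ¬ Integrable a μ) ∧
        t ∈ Ioo 0 (u / (u - ξ)) ∧
        ∫⁻ x, ENNReal.ofReal (Real.log (a x * t / u - t + 1)) ∂μ < ⊤)) := by
  have key {u t : ℝ} (hu : max 0 ξ < u) (ht : t ∈ Ioo 0 (u / (u - ξ))) :=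
    lintegral_ofReal_log_lt_top_iff μ hmeas hge hu ht
  obtain ⟨u₀, t₀, hu₀, hE₀, ht₀⟩ := exists_admissible μ hmeas hge hnc hEpos
  refine ⟨⟨fun h u t hu _ ht => (key hu ht).2 h, fun h => (key hu₀ ht₀).1 (h u₀ t₀ hu₀ hE₀ ht₀)⟩,
    fun h => ⟨u₀, t₀, hu₀, hE₀, ht₀, h u₀ t₀ hu₀ hE₀ ht₀⟩, ?_⟩
  rintro ⟨u₁, t₁, hu₁, -, ht₁, hfin⟩ u t hu - ht
  exact (key hu ht).2 ((key hu₁ ht₁).1 hfin)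

/-- The following are equivalent: (1) `∫_{a>1} log a dF < +∞`;
(2) `G̃_u(t) < +∞` for every admissible `(u,t)`; (3) `G̃_{u₁}(t₁) < +∞` for
some admissible `(u₁,t₁)`. Finiteness of `G̃_u(t)` is expressed as the
finiteness of the positive part of `∫ log(a t/u - t + 1) dF`. -/
theorem stmt13 {Ω : Type*} [MeasurableSpace Ω] (μ : Measure Ω) [IsProbabilityMeasure μ]
    (a : Ω → ℝ) (hmeas : Measurable a) (ξ : ℝ)
    (hge : ∀ᵐ x ∂μ, ξ ≤ a x)
    (hinf : ∀ ε > 0, 0 < μ {x | a x < ξ + ε})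
    (hnc : ∃ δ > 0, μ {x | a x < ξ + δ} < 1)
    (hEpos : 0 < ∫ x, a x ∂μ ∨ ¬ Integrable a μ) :
    ((∫⁻ x in {x | 1 < a x}, ENNReal.ofReal (Real.log (a x)) ∂μ < ⊤) ↔
      (∀ u t : ℝ, max 0 ξ < u → (u < ∫ x, a x ∂μ ∨ ¬ Integrable a μ) →
        t ∈ Ioo 0 (u / (u - ξ)) →
        ∫⁻ x, ENNReal.ofReal (Real.log (a x * t / u - t + 1)) ∂μ < ⊤)) ∧
    ((∀ u t : ℝ, max 0 ξ < u → (u < ∫ x, a x ∂μ ∨ ¬ Integrable a μ) →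
        t ∈ Ioo 0 (u / (u - ξ)) →
        ∫⁻ x, ENNReal.ofReal (Real.log (a x * t / u - t + 1)) ∂μ < ⊤) ↔
      (∃ u t : ℝ, max 0 ξ < u ∧ (u < ∫ x, a x ∂μ ∨ ¬ Integrable a μ) ∧
        t ∈ Ioo 0 (u / (u - ξ)) ∧
        ∫⁻ x, ENNReal.ofReal (Real.log (a x * t / u - t + 1)) ∂μ < ⊤)) :=
  stmt13_general μ a hmeas ξ hge hnc hEpos
end

section
/- Assume ∫_{a>1} log a dF < +∞ and max(0,ξ) < u < E. Then the function t ↦ G̃_u(t) = exp(∫ log(a t/u - t + 1) dF) is strictly concave on (0, u/(u-ξ)) whenever a is not a.e. equal to u; in particular ∂²G̃_u/∂t² < 0. -/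
/-!
`G̃_u(t)` is the geometric mean `GM f = exp (∫ log f)` of the affine family
`f_t = 1 + t (a/u - 1)`, which is bounded below by the positive constant `1 - t (u-ξ)/u` for
`t < u/(u-ξ)`. `GM` is positively homogeneous and superadditive: Jensen's inequality for `exp`,
applied to the weights `f/(f+g)` and `g/(f+g)` whose integrals add up to `1`, gives
`(GM f + GM g) / GM (f+g) ≤ 1`. Along an affine family this is concavity, and the inequality is
strict because `f_s / f_t` is not a.e. constant for `s ≠ t` as soon as `a` is not a.e. constant.
-/

open MeasureTheory Real Filter Set

noncomputable def geomMean {Ω : Type*} [MeasurableSpace Ω] (μ : Measure Ω) (f : Ω → ℝ) : ℝ :=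
  exp (∫ x, log (f x) ∂μ)

section GeomMean

variable {Ω : Type*} [MeasurableSpace Ω] {μ : Measure Ω} {f g : Ω → ℝ}

lemma log_div_ae_eq (hf : ∀ᵐ x ∂μ, 0 < f x) (hg : ∀ᵐ x ∂μ, 0 < g x) :
    (fun x => log (f x / g x)) =ᵐ[μ] fun x => log (f x) - log (g x) := by
  filter_upwards [hf, hg] with x hfx hgx
  exact log_div hfx.ne' hgx.ne'

lemma log_const_mul_ae_eq {c : ℝ} (hc : 0 < c) (hf : ∀ᵐ x ∂μ, 0 < f x) :
    (fun x => log (c * f x)) =ᵐ[μ] fun x => log c + log (f x) := by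
  filter_upwards [hf] with x hfx
  exact log_mul hc.ne' hfx.ne'

lemma integrable_log_const_mul [IsFiniteMeasure μ] {c : ℝ} (hc : 0 < c)
    (hf : ∀ᵐ x ∂μ, 0 < f x) (hlog : Integrable (fun x => log (f x)) μ) :
    Integrable (fun x => log (c * f x)) μ :=
  ((integrable_const _).add hlog).congr (log_const_mul_ae_eq hc hf).symm

lemma geomMean_div (hf : ∀ᵐ x ∂μ, 0 < f x) (hg : ∀ᵐ x ∂μ, 0 < g x)
    (hlf : Integrable (fun x => log (f x)) μ) (hlg : Integrable (fun x => log (g x)) μ) :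
    geomMean μ (fun x => f x / g x) = geomMean μ f / geomMean μ g := by
  rw [geomMean, geomMean, geomMean, integral_congr_ae (log_div_ae_eq hf hg),
    integral_sub hlf hlg, exp_sub]

lemma aestronglyMeasurable_of_integrable_log (hf : ∀ᵐ x ∂μ, 0 < f x)
    (hlog : Integrable (fun x => log (f x)) μ) : AEStronglyMeasurable f μ :=
  (continuous_exp.comp_aestronglyMeasurable hlog.1).congr <| by
    filter_upwards [hf] with x hx
    exact exp_log hx

lemma integrable_div_add [IsFiniteMeasure μ] (hf : ∀ᵐ x ∂μ, 0 < f x) (hg : ∀ᵐ x ∂μ, 0 < g x)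
    (hfm : AEStronglyMeasurable f μ) (hgm : AEStronglyMeasurable g μ) :
    Integrable (fun x => f x / (f x + g x)) μ := by
  refine (integrable_const (1 : ℝ)).mono'
    (hfm.aemeasurable.div (hfm.aemeasurable.add hgm.aemeasurable)).aestronglyMeasurable ?_
  filter_upwards [hf, hg] with x hfx hgx
  rw [norm_of_nonneg (by positivity), div_le_one (by positivity)]
  linarith

variable [IsProbabilityMeasure μ]

lemma geomMean_const_mul {c : ℝ} (hc : 0 < c)
    (hf : ∀ᵐ x ∂μ, 0 < f x) (hlog : Integrable (fun x => log (f x)) μ) :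
    geomMean μ (fun x => c * f x) = c * geomMean μ f := by
  rw [geomMean, geomMean, integral_congr_ae (log_const_mul_ae_eq hc hf),
    integral_add (integrable_const _) hlog, integral_const, probReal_univ, one_smul,
    exp_add, exp_log hc]

lemma geomMean_le_integral (hf : ∀ᵐ x ∂μ, 0 < f x) (hfi : Integrable f μ)
    (hlog : Integrable (fun x => log (f x)) μ) : geomMean μ f ≤ ∫ x, f x ∂μ := by
  have hexp : (fun x => exp (log (f x))) =ᵐ[μ] f := by
    filter_upwards [hf] with x hx
    exact exp_log hx
  have := convexOn_exp.map_integral_le continuous_exp.continuousOn isClosed_univ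
    (ae_of_all _ fun x => mem_univ (log (f x))) hlog (hfi.congr hexp.symm)
  rwa [integral_congr_ae hexp] at this

lemma geomMean_lt_integral (hf : ∀ᵐ x ∂μ, 0 < f x) (hfi : Integrable f μ)
    (hlog : Integrable (fun x => log (f x)) μ) (hnc : ¬ ∃ C, ∀ᵐ x ∂μ, f x = C) :
    geomMean μ f < ∫ x, f x ∂μ := by
  have hexp : (fun x => exp (log (f x))) =ᵐ[μ] f := by
    filter_upwards [hf] with x hx
    exact exp_log hx
  rcases strictConvexOn_exp.ae_eq_const_or_map_average_lt continuous_exp.continuousOn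
    isClosed_univ (ae_of_all _ fun x => mem_univ (log (f x))) hlog (hfi.congr hexp.symm)
    with hconst | hlt
  · refine absurd ⟨exp (⨍ x, log (f x) ∂μ), ?_⟩ hnc
    filter_upwards [hconst, hexp] with x hx hx'
    rw [← hx', hx, Function.const_apply]
  · simpa only [geomMean, average_eq_integral, integral_congr_ae hexp] using hlt

theorem geomMean_add_lt (hf : ∀ᵐ x ∂μ, 0 < f x) (hg : ∀ᵐ x ∂μ, 0 < g x)
    (hlf : Integrable (fun x => log (f x)) μ) (hlg : Integrable (fun x => log (g x)) μ)
    (hlfg : Integrable (fun x => log (f x + g x)) μ)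
    (hnc : ¬ ∃ C, ∀ᵐ x ∂μ, f x = C * (f x + g x)) :
    geomMean μ f + geomMean μ g < geomMean μ (fun x => f x + g x) := by
  have hfg : ∀ᵐ x ∂μ, 0 < f x + g x := by
    filter_upwards [hf, hg] with x hfx hgx
    positivity
  have hfm := aestronglyMeasurable_of_integrable_log hf hlf
  have hgm := aestronglyMeasurable_of_integrable_log hg hlg
  have hr : Integrable (fun x => f x / (f x + g x)) μ := integrable_div_add hf hg hfm hgm
  have hs : Integrable (fun x => g x / (f x + g x)) μ :=
    (integrable_div_add hg hf hgm hfm).congr (ae_of_all _ fun x => by simp only [add_comm])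
  have hr_pos : ∀ᵐ x ∂μ, 0 < f x / (f x + g x) := by
    filter_upwards [hf, hfg] with x hfx hfgx
    positivity
  have hs_pos : ∀ᵐ x ∂μ, 0 < g x / (f x + g x) := by
    filter_upwards [hg, hfg] with x hgx hfgx
    positivity
  have hr_nc : ¬ ∃ C, ∀ᵐ x ∂μ, f x / (f x + g x) = C := by
    rintro ⟨C, hC⟩
    refine hnc ⟨C, ?_⟩
    filter_upwards [hC, hfg] with x hx hfgx
    rw [← hx, div_mul_cancel₀ _ hfgx.ne']
  have hsum : ∫ x, f x / (f x + g x) ∂μ + ∫ x, g x / (f x + g x) ∂μ = 1 := by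
    rw [← integral_add hr hs, integral_congr_ae (g := fun _ => (1 : ℝ)), integral_const,
      probReal_univ, one_smul]
    filter_upwards [hfg] with x hfgx
    rw [← add_div, div_self hfgx.ne']
  have hjr := geomMean_lt_integral hr_pos hr ((hlf.sub hlfg).congr (log_div_ae_eq hf hfg).symm)
    hr_nc
  have hjs := geomMean_le_integral hs_pos hs ((hlg.sub hlfg).congr (log_div_ae_eq hg hfg).symm)
  rw [geomMean_div hf hfg hlf hlfg] at hjr
  rw [geomMean_div hg hfg hlg hlfg] at hjs
  have hpos : 0 < geomMean μ (fun x => f x + g x) := exp_pos _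
  rw [← div_lt_one hpos, add_div]
  linarith

end GeomMean

section Affine

variable {Ω : Type*} [MeasurableSpace Ω] {μ : Measure Ω}

lemma not_ae_eq_const_of_measure_lt_pos_of_lt_one [IsProbabilityMeasure μ] {a : Ω → ℝ} {y : ℝ}
    (hpos : 0 < μ {x | a x < y}) (hlt : μ {x | a x < y} < 1) :
    ¬ ∃ C, ∀ᵐ x ∂μ, a x = C := by
  rintro ⟨C, hC⟩
  have hset : {x | a x < y} =ᵐ[μ] {_x : Ω | C < y} := by
    filter_upwards [hC] with x hx
    change (a x < y) = (C < y)
    rw [hx]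
  rw [measure_congr hset] at hpos hlt
  by_cases hCy : C < y
  · simp [hCy] at hlt
  · simp [hCy] at hpos

lemma not_ae_eq_const_mul_one_add_mul [NeZero μ] {b : Ω → ℝ} (hb : ¬ ∃ C, ∀ᵐ x ∂μ, b x = C)
    {s t : ℝ} (hst : s ≠ t) : ¬ ∃ C, ∀ᵐ x ∂μ, 1 + s * b x = C * (1 + t * b x) := by
  rintro ⟨C, hC⟩
  by_cases hs : s = C * t
  · obtain ⟨x, hx⟩ := hC.exists
    have hC1 : C = 1 := by linear_combination -hx + b x * hs
    exact hst (by rw [hs, hC1, one_mul])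
  · refine hb ⟨(C - 1) / (s - C * t), ?_⟩
    filter_upwards [hC] with x hx
    rw [eq_div_iff (sub_ne_zero.2 hs)]
    linear_combination hx

variable [IsProbabilityMeasure μ]

theorem strictConcaveOn_geomMean_one_add_mul {b : Ω → ℝ} {s : Set ℝ} (hs : Convex ℝ s)
    (hpos : ∀ t ∈ s, ∀ᵐ x ∂μ, 0 < 1 + t * b x)
    (hlog : ∀ t ∈ s, Integrable (fun x => log (1 + t * b x)) μ)
    (hb : ¬ ∃ C, ∀ᵐ x ∂μ, b x = C) :
    StrictConcaveOn ℝ s (fun t => geomMean μ (fun x => 1 + t * b x)) := by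
  refine ⟨hs, fun t₁ ht₁ t₂ ht₂ hne c d hc hd hcd => ?_⟩
  set T := c * t₁ + d * t₂
  have hT : T ∈ s := hs ht₁ ht₂ hc.le hd.le hcd
  have hT₁ : t₁ ≠ T := fun h => hne <| by
    have : d * t₂ = d * t₁ := by linear_combination -h - t₁ * hcd
    exact (mul_left_cancel₀ hd.ne' this).symm
  have hsplit : ∀ x, 1 + T * b x = c * (1 + t₁ * b x) + d * (1 + t₂ * b x) := fun x => by
    linear_combination -hcd
  simp only [smul_eq_mul]
  rw [← geomMean_const_mul hc (hpos t₁ ht₁) (hlog t₁ ht₁),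
    ← geomMean_const_mul hd (hpos t₂ ht₂) (hlog t₂ ht₂),
    show (fun x => 1 + T * b x) = _ from funext hsplit]
  refine geomMean_add_lt ?_ ?_ (integrable_log_const_mul hc (hpos t₁ ht₁) (hlog t₁ ht₁))
    (integrable_log_const_mul hd (hpos t₂ ht₂) (hlog t₂ ht₂))
    (by simpa only [hsplit] using hlog T hT) ?_
  · filter_upwards [hpos t₁ ht₁] with x hx using mul_pos hc hx
  · filter_upwards [hpos t₂ ht₂] with x hx using mul_pos hd hx
  · rintro ⟨C, hC⟩
    refine not_ae_eq_const_mul_one_add_mul hb hT₁ ⟨C / c, ?_⟩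
    filter_upwards [hC] with x hx
    rw [← hsplit x] at hx
    field_simp
    linear_combination hx

end Affine

section LogIntegrability

variable {Ω : Type*} [MeasurableSpace Ω] {μ : Measure Ω}

lemma integrable_log_max_one {a : Ω → ℝ} (hmeas : Measurable a)
    (hlog : ∫⁻ x in {x | 1 < a x}, ENNReal.ofReal (log (a x)) ∂μ < ⊤) :
    Integrable (fun x => log (max 1 (a x))) μ := by
  have hm : Measurable fun x => log (max 1 (a x)) :=
    measurable_log.comp (measurable_const.max hmeas)
  refine ⟨hm.aestronglyMeasurable, ?_⟩
  rw [hasFiniteIntegral_iff_ofReal (ae_of_all _ fun x => log_nonneg (le_max_left 1 (a x)))]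
  have hind : (fun x => ENNReal.ofReal (log (max 1 (a x)))) =
      {x | 1 < a x}.indicator fun x => ENNReal.ofReal (log (a x)) := by
    funext x
    by_cases h : 1 < a x
    · rw [indicator_of_mem (show x ∈ {x | 1 < a x} from h), max_eq_right h.le]
    · rw [indicator_of_notMem (show x ∉ {x | 1 < a x} from h), max_eq_left (not_lt.1 h),
        log_one, ENNReal.ofReal_zero]
  rwa [hind, lintegral_indicator (measurableSet_lt measurable_const hmeas)]

lemma integrable_log_of_le [IsFiniteMeasure μ] {f g : Ω → ℝ} {ε : ℝ} (hε : 0 < ε)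
    (hf : AEMeasurable f μ) (hlow : ∀ᵐ x ∂μ, ε ≤ f x) (hup : ∀ᵐ x ∂μ, f x ≤ g x)
    (hg : Integrable (fun x => log (g x)) μ) : Integrable (fun x => log (f x)) μ := by
  refine ((integrable_const |log ε|).add hg.abs).mono'
    (measurable_log.comp_aemeasurable hf).aestronglyMeasurable ?_
  filter_upwards [hlow, hup] with x hlx hux
  have hl : log ε ≤ log (f x) := log_le_log hε hlx
  have hu : log (f x) ≤ log (g x) := log_le_log (hε.trans_le hlx) hux
  show |log (f x)| ≤ |log ε| + |log (g x)|
  rw [abs_le]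
  constructor
  · linarith [neg_abs_le (log ε), abs_nonneg (log (g x))]
  · linarith [le_abs_self (log (g x)), abs_nonneg (log ε)]

lemma integrable_log_one_add_mul_div_sub_one [IsFiniteMeasure μ] {a : Ω → ℝ}
    (hmeas : Measurable a) (hlog : ∫⁻ x in {x | 1 < a x}, ENNReal.ofReal (log (a x)) ∂μ < ⊤)
    {u t ε : ℝ} (hu : 0 < u) (ht : 0 ≤ t) (hε : 0 < ε)
    (hlow : ∀ᵐ x ∂μ, ε ≤ 1 + t * (a x / u - 1)) :
    Integrable (fun x => log (1 + t * (a x / u - 1))) μ := by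
  have hup : ∀ x, 1 + t * (a x / u - 1) ≤ (1 + t / u) * max 1 (a x) := fun x => by
    have h1 : 1 ≤ max 1 (a x) := le_max_left _ _
    have h2 : t * a x / u ≤ t / u * max 1 (a x) := by
      rw [mul_div_right_comm]
      exact mul_le_mul_of_nonneg_left (le_max_right _ _) (div_nonneg ht hu.le)
    linear_combination h2 + h1 + ht
  refine integrable_log_of_le hε (by fun_prop) hlow (ae_of_all _ hup) ?_
  exact integrable_log_const_mul (by positivity)
    (ae_of_all _ fun x => one_pos.trans_le (le_max_left 1 (a x)))
    (integrable_log_max_one hmeas hlog)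

end LogIntegrability

lemma one_sub_mul_div_le_one_add_mul {ξ a u t : ℝ} (hu : 0 < u) (ht : 0 ≤ t) (ha : ξ ≤ a) :
    1 - t * (u - ξ) / u ≤ 1 + t * (a / u - 1) := by
  have hgap : 1 + t * (a / u - 1) = 1 - t * (u - ξ) / u + t * (a - ξ) / u := by
    field_simp
    ring
  rw [hgap, le_add_iff_nonneg_right]
  exact div_nonneg (mul_nonneg ht (sub_nonneg.2 ha)) hu.le

theorem stmt14_general {Ω : Type*} [MeasurableSpace Ω] (μ : Measure Ω) [IsProbabilityMeasure μ]
    (a : Ω → ℝ) (hmeas : Measurable a) (ξ : ℝ)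
    (hge : ∀ᵐ x ∂μ, ξ ≤ a x)
    (hinf : ∀ ε > 0, 0 < μ {x | a x < ξ + ε})
    (hnc : ∃ δ > 0, μ {x | a x < ξ + δ} < 1)
    (hlog : ∫⁻ x in {x | 1 < a x}, ENNReal.ofReal (Real.log (a x)) ∂μ < ⊤)
    (u : ℝ) (hu : max 0 ξ < u) :
    StrictConcaveOn ℝ (Ioo 0 (u / (u - ξ)))
      (fun t => Real.exp (∫ x, Real.log (a x * t / u - t + 1) ∂μ)) := by
  have hu0 : 0 < u := (le_max_left 0 ξ).trans_lt hu
  have hξu : 0 < u - ξ := sub_pos.2 ((le_max_right 0 ξ).trans_lt hu)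
  obtain ⟨δ, hδ, hδ1⟩ := hnc
  have hb : ¬ ∃ C, ∀ᵐ x ∂μ, a x / u - 1 = C := by
    rintro ⟨C, hC⟩
    refine not_ae_eq_const_of_measure_lt_pos_of_lt_one (hinf δ hδ) hδ1 ⟨u * (C + 1), ?_⟩
    filter_upwards [hC] with x hx
    rw [← hx]
    field_simp
    ring
  have hε : ∀ t ∈ Ioo 0 (u / (u - ξ)), 0 < 1 - t * (u - ξ) / u := fun t ht => by
    rw [sub_pos, div_lt_one hu0]
    exact (lt_div_iff₀ hξu).1 ht.2
  have hlow : ∀ t ∈ Ioo 0 (u / (u - ξ)),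
      ∀ᵐ x ∂μ, 1 - t * (u - ξ) / u ≤ 1 + t * (a x / u - 1) := fun t ht => by
    filter_upwards [hge] with x hx using one_sub_mul_div_le_one_add_mul hu0 ht.1.le hx
  have hfun : (fun t => exp (∫ x, log (a x * t / u - t + 1) ∂μ)) =
      fun t => geomMean μ (fun x => 1 + t * (a x / u - 1)) := by
    funext t
    rw [geomMean]
    congr 2 with x
    congr 1
    ring
  rw [hfun]
  refine strictConcaveOn_geomMean_one_add_mul (convex_Ioo _ _) (fun t ht => ?_)
    (fun t ht => ?_) hb
  · filter_upwards [hlow t ht] with x hx using (hε t ht).trans_le hx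
  · exact integrable_log_one_add_mul_div_sub_one hmeas hlog hu0 ht.1.le (hε t ht) (hlow t ht)

/-- Assume `∫_{a>1} log a dF < +∞` and `max(0,ξ) < u < E`, with `a` not a.e.
equal to `u`. Then `t ↦ G̃_u(t) = exp(∫ log(a t/u - t + 1) dF)` is strictly
concave on `(0, u/(u-ξ))`. -/
theorem stmt14 {Ω : Type*} [MeasurableSpace Ω] (μ : Measure Ω) [IsProbabilityMeasure μ]
    (a : Ω → ℝ) (hmeas : Measurable a) (ξ : ℝ)
    (hge : ∀ᵐ x ∂μ, ξ ≤ a x)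
    (hinf : ∀ ε > 0, 0 < μ {x | a x < ξ + ε})
    (hnc : ∃ δ > 0, μ {x | a x < ξ + δ} < 1)
    (hlog : ∫⁻ x in {x | 1 < a x}, ENNReal.ofReal (Real.log (a x)) ∂μ < ⊤)
    (u : ℝ) (hu : max 0 ξ < u)
    (huE : u < ∫ x, a x ∂μ ∨ ¬ Integrable a μ)
    (hau : ¬ (∀ᵐ x ∂μ, a x = u)) :
    StrictConcaveOn ℝ (Ioo 0 (u / (u - ξ)))
      (fun t => Real.exp (∫ x, Real.log (a x * t / u - t + 1) ∂μ)) :=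
  stmt14_general μ a hmeas ξ hge hinf hnc hlog u hu
end

section
/- Let t̃_u be the pre-optimal proportion (the unique zero of w_u in (0, u/(u-ξ))) for u ∈ (max(0, ξ+1/H_ξ), E), and assume ∫_{a>1} log a dF < +∞. Then G̃_u(t̃_u) > 1, and u ↦ G̃_u(t̃_u) is strictly decreasing, with ∂G̃_u(t̃_u)/∂u = -(t̃_u/u)·G̃_u(t̃_u). -/
/-!
Write `r = t / u` and `Φ(u, r) = ∫ log (r (a - u) + 1) dF`, so that `G̃_u(t) = exp Φ(u, t / u)` and
`∂Φ/∂r = ∫ (a - u) / (r (a - u) + 1) dF = u w_u(t)`, which is strictly decreasing in `r`. Hence the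
pre-optimal ratio `ρ(u) = t̃_u / u` maximises the concave function `Φ(u, ·)`, and
`Φ(u, ρ(u)) ≥ Φ(u, ρ(u) / 2) ≥ Φ(u, 0) + (ρ(u) / 2) ∂Φ/∂r(u, ρ(u) / 2) > 0`.

The derivative is an envelope theorem. With `I(u, r) = ∫ dF / (r (a - u) + 1)`, concavity of `log`
and maximality of `ρ` squeeze `Φ(v, ρ(v)) - Φ(u, ρ(u))` between `-ρ(v) I(u, ρ(v)) (v - u)` and
`-ρ(u) I(v, ρ(u)) (v - u)`. Since `I = 1 - r ∂Φ/∂r`, the critical-point equation gives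
`I(u, ρ(u)) = 1`, so both bounds tend to `-ρ(u)` once `ρ` is known to be continuous; that follows
from the strict monotonicity of `∂Φ/∂r` in `r` and its continuity in `u` (dominated convergence).
-/

open MeasureTheory Real Filter Set Topology

theorem integral_lt_integral_of_ae_le_of_ae_lt_on {Ω : Type*} [MeasurableSpace Ω]
    {μ : Measure Ω} {f g : Ω → ℝ} {s : Set Ω} (hf : Integrable f μ) (hg : Integrable g μ)
    (hle : f ≤ᵐ[μ] g) (hlt : ∀ᵐ x ∂μ, x ∈ s → f x < g x) (hs : μ s ≠ 0) :
    ∫ x, f x ∂μ < ∫ x, g x ∂μ := by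
  rw [← sub_pos, ← integral_sub hg hf,
    integral_pos_iff_support_of_nonneg_ae (hle.mono fun x hx => sub_nonneg.2 hx) (hg.sub hf)]
  refine (pos_iff_ne_zero.2 hs).trans_le (measure_mono_ae ?_)
  filter_upwards [hlt] with x hx hxs
  exact sub_ne_zero.2 (hx hxs).ne'

theorem hasDerivAt_of_tendsto_of_sub_le_of_le_sub {G A B : ℝ → ℝ} {u L : ℝ}
    (hA : Tendsto A (𝓝 u) (𝓝 L)) (hB : Tendsto B (𝓝 u) (𝓝 L))
    (hup : ∀ᶠ v in 𝓝 u, G v - G u ≤ A v * (v - u))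
    (hlo : ∀ᶠ v in 𝓝 u, B v * (v - u) ≤ G v - G u) : HasDerivAt G L u := by
  rw [hasDerivAt_iff_tendsto_slope]
  have hmin := (hA.min hB).mono_left (nhdsWithin_le_nhds (s := {u}ᶜ))
  have hmax := (hA.max hB).mono_left (nhdsWithin_le_nhds (s := {u}ᶜ))
  rw [min_self] at hmin
  rw [max_self] at hmax
  have hbounds :
      ∀ᶠ v in 𝓝[≠] u, min (A v) (B v) ≤ slope G u v ∧ slope G u v ≤ max (A v) (B v) := by
    filter_upwards [nhdsWithin_le_nhds hup, nhdsWithin_le_nhds hlo, self_mem_nhdsWithin]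
      with v hv₁ hv₂ hv
    rw [slope_def_field]
    rcases lt_or_gt_of_ne hv with h | h
    · have h' : v - u < 0 := sub_neg.2 h
      exact ⟨(min_le_left _ _).trans ((le_div_iff_of_neg h').2 hv₁),
        ((div_le_iff_of_neg h').2 hv₂).trans (le_max_right _ _)⟩
    · have h' : 0 < v - u := sub_pos.2 h
      exact ⟨(min_le_right _ _).trans ((le_div_iff₀ h').2 hv₂),
        ((div_le_iff₀ h').2 hv₁).trans (le_max_left _ _)⟩
  exact tendsto_of_tendsto_of_tendsto_of_le_of_le' hmin hmax
    (hbounds.mono fun _ h => h.1) (hbounds.mono fun _ h => h.2)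

section ImplicitZero

variable {f : ℝ → ℝ → ℝ} {ρ : ℝ → ℝ} {A : Set (ℝ × ℝ)} {u : ℝ}

theorem eventually_lt_of_strictAntiOn_of_eq_zero (hA : IsOpen A)
    (hanti : ∀ v, StrictAntiOn (f v) {r | (v, r) ∈ A})
    (hcont : ∀ r, (u, r) ∈ A → ContinuousAt (fun v => f v r) u)
    (hρ : ∀ᶠ v in 𝓝 u, (v, ρ v) ∈ A ∧ f v (ρ v) = 0) {b : ℝ} (hb : b < ρ u) :
    ∀ᶠ v in 𝓝 u, b < ρ v := by
  have hsect : ∀ᶠ s in 𝓝[<] ρ u, b < s ∧ (u, s) ∈ A :=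
    nhdsWithin_le_nhds <| (eventually_gt_nhds hb).and <|
      (continuous_const.prodMk continuous_id).continuousAt.preimage_mem_nhds
        (hA.mem_nhds hρ.self_of_nhds.1)
  obtain ⟨s, ⟨hbs, hsA⟩, hsρ⟩ := (hsect.and self_mem_nhdsWithin).exists
  have hfs : 0 < f u s := hρ.self_of_nhds.2 ▸ hanti u hsA hρ.self_of_nhds.1 hsρ
  filter_upwards [hρ, (hcont s hsA).eventually (lt_mem_nhds hfs),
    (continuous_id.prodMk continuous_const).continuousAt.preimage_mem_nhds (hA.mem_nhds hsA)]
    with v ⟨hvA, hv0⟩ hfv hsv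
  by_contra! h
  exact (hfv.trans_le (hv0 ▸ (hanti v).antitoneOn hvA hsv (h.trans hbs.le))).false

theorem continuousAt_of_strictAntiOn_of_eq_zero (hA : IsOpen A)
    (hanti : ∀ v, StrictAntiOn (f v) {r | (v, r) ∈ A})
    (hcont : ∀ r, (u, r) ∈ A → ContinuousAt (fun v => f v r) u)
    (hρ : ∀ᶠ v in 𝓝 u, (v, ρ v) ∈ A ∧ f v (ρ v) = 0) : ContinuousAt ρ u := by
  refine tendsto_order.2
    ⟨fun b hb => eventually_lt_of_strictAntiOn_of_eq_zero hA hanti hcont hρ hb, fun b hb => ?_⟩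
  have hneg := eventually_lt_of_strictAntiOn_of_eq_zero (f := fun v r => -f v (-r))
    (ρ := fun v => -ρ v) (A := (fun p : ℝ × ℝ => (p.1, -p.2)) ⁻¹' A) (b := -b)
    (hA.preimage (by fun_prop)) (fun v r hr r' hr' h => neg_lt_neg (hanti v hr' hr (neg_lt_neg h)))
    (fun r hr => (hcont (-r) hr).neg) (by simpa using hρ) (neg_lt_neg hb)
  simpa using hneg

end ImplicitZero

theorem log_le_log_add_sub_div {x y : ℝ} (hx : 0 < x) (hy : 0 < y) :
    log y ≤ log x + (y - x) / x := by
  have h := log_le_sub_one_of_pos (div_pos hy hx)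
  rw [log_div hy.ne' hx.ne'] at h
  rw [sub_div, div_self hx.ne']
  linarith

theorem integral_log_le_integral_log_add {Ω : Type*} [MeasurableSpace Ω] {μ : Measure Ω}
    {f g : Ω → ℝ} (hf : ∀ᵐ x ∂μ, 0 < f x) (hg : ∀ᵐ x ∂μ, 0 < g x)
    (hlf : Integrable (fun x => log (f x)) μ) (hlg : Integrable (fun x => log (g x)) μ)
    (hq : Integrable (fun x => (g x - f x) / f x) μ) :
    ∫ x, log (g x) ∂μ ≤ ∫ x, log (f x) ∂μ + ∫ x, (g x - f x) / f x ∂μ := by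
  rw [← integral_add hlf hq]
  refine integral_mono_ae hlg (hlf.add hq) ?_
  filter_upwards [hf, hg] with x hfx hgx using log_le_log_add_sub_div hfx hgx

section LogGrowth

variable {Ω : Type*} [MeasurableSpace Ω] (μ : Measure Ω) (a : Ω → ℝ)

/-- With `r = t / u`, the paper's `G̃_u(t)` is `exp (logGrowth μ a u r)` and its `w_u(t)` is
`logGrowthSlope μ a u r / u`. Lemma names call `r * (a x - u) + 1 = a x * t / u - t + 1` the
wealth. -/
noncomputable def logGrowth (u r : ℝ) : ℝ := ∫ x, log (r * (a x - u) + 1) ∂μ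

noncomputable def logGrowthSlope (u r : ℝ) : ℝ := ∫ x, (a x - u) / (r * (a x - u) + 1) ∂μ

noncomputable def invWealthMean (u r : ℝ) : ℝ := ∫ x, (r * (a x - u) + 1)⁻¹ ∂μ

variable {μ a} {ξ u v r r' : ℝ}

theorem logGrowth_div {t : ℝ} (hu : u ≠ 0) :
    logGrowth μ a u (t / u) = ∫ x, log (a x * t / u - t + 1) ∂μ := by
  refine integral_congr_ae (Eventually.of_forall fun x => ?_)
  simp only
  congr 1
  field_simp

theorem logGrowthSlope_div {t : ℝ} (hu : u ≠ 0) :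
    logGrowthSlope μ a u (t / u) = u * ∫ x, (a x - u) / (a x * t - u * t + u) ∂μ := by
  rw [logGrowthSlope, ← integral_const_mul]
  refine integral_congr_ae (Eventually.of_forall fun x => ?_)
  simp only
  rw [show t / u * (a x - u) + 1 = (a x * t - u * t + u) / u by field_simp, div_div_eq_mul_div]
  ring

theorem one_sub_mul_le_mul_sub_add_one {y : ℝ} (hy : ξ ≤ y) (hr : 0 ≤ r) :
    1 - r * (u - ξ) ≤ r * (y - u) + 1 := by
  nlinarith

theorem ae_wealth_pos (hge : ∀ᵐ x ∂μ, ξ ≤ a x) (hr : 0 ≤ r) (hru : r * (u - ξ) < 1) :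
    ∀ᵐ x ∂μ, 0 < r * (a x - u) + 1 := by
  filter_upwards [hge] with x hx
  linarith [one_sub_mul_le_mul_sub_add_one (u := u) hx hr]

theorem sub_div_wealth_ae_eq (hge : ∀ᵐ x ∂μ, ξ ≤ a x) (hr : 0 < r) (hru : r * (u - ξ) < 1) :
    (fun x => (a x - u) / (r * (a x - u) + 1)) =ᵐ[μ]
      fun x => (1 - (r * (a x - u) + 1)⁻¹) / r := by
  filter_upwards [ae_wealth_pos hge hr.le hru] with x hx
  rw [eq_div_iff hr.ne', div_mul_eq_mul_div, div_eq_iff hx.ne', sub_mul 1, one_mul,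
    inv_mul_cancel₀ hx.ne']
  ring

variable [IsFiniteMeasure μ]

theorem integrable_inv_wealth (hmeas : Measurable a) (hge : ∀ᵐ x ∂μ, ξ ≤ a x) (hr : 0 ≤ r)
    (hru : r * (u - ξ) < 1) : Integrable (fun x => (r * (a x - u) + 1)⁻¹) μ := by
  refine (integrable_const (1 - r * (u - ξ))⁻¹).mono' (by fun_prop) ?_
  filter_upwards [hge] with x hx
  have hlow := one_sub_mul_le_mul_sub_add_one (u := u) hx hr
  rw [norm_inv, Real.norm_of_nonneg (by linarith)]
  exact inv_anti₀ (by linarith) hlow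

theorem integrable_log_wealth (hmeas : Measurable a) (hge : ∀ᵐ x ∂μ, ξ ≤ a x)
    (hlog : IntegrableOn (fun x => log (a x)) {x | 1 < a x} μ) (hr : 0 ≤ r)
    (hru : r * (u - ξ) < 1) : Integrable (fun x => log (r * (a x - u) + 1)) μ := by
  set c := r + |1 - r * u| + 1
  have hc : 0 < c := by positivity
  have hind := hlog.integrable_indicator (measurableSet_lt measurable_const hmeas)
  refine ((integrable_const (|log (1 - r * (u - ξ))| + |log c|)).add hind).mono'
    (measurable_log.comp (by fun_prop)).aestronglyMeasurable ?_
  filter_upwards [hge] with x hx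
  have hlow := one_sub_mul_le_mul_sub_add_one (u := u) hx hr
  have hup : r * (a x - u) + 1 ≤ c * max (a x) 1 := by
    rcases le_or_gt (a x) 1 with h | h
    · rw [max_eq_right h]
      nlinarith [le_abs_self (1 - r * u)]
    · rw [max_eq_left h.le]
      nlinarith [le_abs_self (1 - r * u), abs_nonneg (1 - r * u)]
  have hmax : log (max (a x) 1) = {x | 1 < a x}.indicator (fun x => log (a x)) x := by
    by_cases h : 1 < a x
    · rw [max_eq_left h.le, indicator_of_mem (by exact h)]
    · rw [max_eq_right (not_lt.1 h), log_one, indicator_of_notMem (by exact h)]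
  have hlogup := log_le_log (by linarith) hup
  rw [log_mul hc.ne' (by positivity), hmax] at hlogup
  have hloglow := log_le_log (by linarith) hlow
  have hind0 : 0 ≤ {x | 1 < a x}.indicator (fun x => log (a x)) x :=
    indicator_nonneg (fun y (hy : 1 < a y) => log_nonneg hy.le) x
  rw [Real.norm_eq_abs, abs_le, Pi.add_apply]
  constructor <;> linarith [neg_abs_le (log (1 - r * (u - ξ))), le_abs_self (log c),
    abs_nonneg (log c), abs_nonneg (log (1 - r * (u - ξ)))]

theorem integrable_sub_div_wealth (hmeas : Measurable a) (hge : ∀ᵐ x ∂μ, ξ ≤ a x) (hr : 0 < r)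
    (hru : r * (u - ξ) < 1) : Integrable (fun x => (a x - u) / (r * (a x - u) + 1)) μ :=
  (((integrable_const 1).sub (integrable_inv_wealth hmeas hge hr.le hru)).div_const r).congr
    (sub_div_wealth_ae_eq hge hr hru).symm

theorem logGrowth_le_add_mul_invWealthMean (hmeas : Measurable a) (hge : ∀ᵐ x ∂μ, ξ ≤ a x)
    (hlog : IntegrableOn (fun x => log (a x)) {x | 1 < a x} μ) (hr : 0 ≤ r)
    (hru : r * (u - ξ) < 1) (hrv : r * (v - ξ) < 1) :
    logGrowth μ a v r ≤ logGrowth μ a u r + r * (u - v) * invWealthMean μ a u r := by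
  have hq : (fun x => (r * (a x - v) + 1 - (r * (a x - u) + 1)) / (r * (a x - u) + 1)) =
      fun x => r * (u - v) * (r * (a x - u) + 1)⁻¹ := funext fun x => by ring
  have h := integral_log_le_integral_log_add (ae_wealth_pos hge hr hru) (ae_wealth_pos hge hr hrv)
    (integrable_log_wealth hmeas hge hlog hr hru) (integrable_log_wealth hmeas hge hlog hr hrv)
    (hq ▸ (integrable_inv_wealth hmeas hge hr hru).const_mul _)
  rwa [hq, integral_const_mul] at h

theorem logGrowth_le_add_mul_logGrowthSlope (hmeas : Measurable a) (hge : ∀ᵐ x ∂μ, ξ ≤ a x)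
    (hlog : IntegrableOn (fun x => log (a x)) {x | 1 < a x} μ) (hr : 0 < r)
    (hru : r * (u - ξ) < 1) (hr' : 0 ≤ r') (hr'u : r' * (u - ξ) < 1) :
    logGrowth μ a u r' ≤ logGrowth μ a u r + (r' - r) * logGrowthSlope μ a u r := by
  have hq : (fun x => (r' * (a x - u) + 1 - (r * (a x - u) + 1)) / (r * (a x - u) + 1)) =
      fun x => (r' - r) * ((a x - u) / (r * (a x - u) + 1)) := funext fun x => by ring
  have h := integral_log_le_integral_log_add (ae_wealth_pos hge hr.le hru)
    (ae_wealth_pos hge hr' hr'u)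
    (integrable_log_wealth hmeas hge hlog hr.le hru) (integrable_log_wealth hmeas hge hlog hr' hr'u)
    (hq ▸ (integrable_sub_div_wealth hmeas hge hr hru).const_mul _)
  rwa [hq, integral_const_mul] at h

theorem logGrowth_le_of_logGrowthSlope_eq_zero (hmeas : Measurable a)
    (hge : ∀ᵐ x ∂μ, ξ ≤ a x) (hlog : IntegrableOn (fun x => log (a x)) {x | 1 < a x} μ)
    (hr : 0 < r) (hru : r * (u - ξ) < 1) (hzero : logGrowthSlope μ a u r = 0)
    (hr' : 0 ≤ r') (hr'u : r' * (u - ξ) < 1) : logGrowth μ a u r' ≤ logGrowth μ a u r := by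
  simpa [hzero] using logGrowth_le_add_mul_logGrowthSlope hmeas hge hlog hr hru hr' hr'u

theorem logGrowthSlope_strictAntiOn (hmeas : Measurable a) (hge : ∀ᵐ x ∂μ, ξ ≤ a x)
    (hbelow : μ {x | a x < u} ≠ 0) :
    StrictAntiOn (logGrowthSlope μ a u) {r | 0 < r ∧ r * (u - ξ) < 1} := by
  rintro r ⟨hr, hru⟩ r' ⟨hr', hr'u⟩ hrr'
  refine integral_lt_integral_of_ae_le_of_ae_lt_on (integrable_sub_div_wealth hmeas hge hr' hr'u)
    (integrable_sub_div_wealth hmeas hge hr hru) ?_ ?_ hbelow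
  · filter_upwards [ae_wealth_pos hge hr.le hru, ae_wealth_pos hge hr'.le hr'u] with x hy hy'
    rw [div_le_div_iff₀ hy' hy]
    nlinarith [sq_nonneg (a x - u)]
  · filter_upwards [ae_wealth_pos hge hr.le hru, ae_wealth_pos hge hr'.le hr'u] with x hy hy' hxu
    rw [div_lt_div_iff₀ hy' hy]
    nlinarith [mul_pos (sub_pos.2 hrr') (pow_pos (sub_pos.2 (show a x < u from hxu)) 2)]

theorem logGrowth_pos_of_logGrowthSlope_eq_zero (hmeas : Measurable a)
    (hge : ∀ᵐ x ∂μ, ξ ≤ a x) (hlog : IntegrableOn (fun x => log (a x)) {x | 1 < a x} μ)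
    (hbelow : μ {x | a x < u} ≠ 0) (hr : 0 < r) (hru : r * (u - ξ) < 1)
    (hzero : logGrowthSlope μ a u r = 0) : 0 < logGrowth μ a u r := by
  have hr2 : 0 < r / 2 := half_pos hr
  have hr2u : r / 2 * (u - ξ) < 1 := by nlinarith
  have hslope : 0 < logGrowthSlope μ a u (r / 2) :=
    hzero ▸ logGrowthSlope_strictAntiOn hmeas hge hbelow ⟨hr2, hr2u⟩ ⟨hr, hru⟩ (half_lt_self hr)
  have hzero' : logGrowth μ a u 0 = 0 := by simp [logGrowth]
  have h₀ := logGrowth_le_add_mul_logGrowthSlope hmeas hge hlog hr2 hr2u le_rfl (by simp)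
  have h₁ := logGrowth_le_of_logGrowthSlope_eq_zero hmeas hge hlog hr hru hzero hr2.le hr2u
  nlinarith

theorem continuousAt_invWealthMean (hmeas : Measurable a) (hge : ∀ᵐ x ∂μ, ξ ≤ a x) (hr : 0 < r)
    (hru : r * (u - ξ) < 1) :
    ContinuousAt (fun p : ℝ × ℝ => invWealthMean μ a p.1 p.2) (u, r) := by
  set δ := 1 - r * (u - ξ)
  have hnear : ∀ᶠ p : ℝ × ℝ in 𝓝 (u, r), 0 < p.2 ∧ δ / 2 < 1 - p.2 * (p.1 - ξ) :=
    (continuous_snd.continuousAt.eventually (lt_mem_nhds hr)).and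
      ((by fun_prop : Continuous fun p : ℝ × ℝ => 1 - p.2 * (p.1 - ξ)).continuousAt.eventually
        (lt_mem_nhds (by linarith)))
  refine continuousAt_of_dominated (bound := fun _ => (δ / 2)⁻¹) ?_ ?_ (integrable_const _) ?_
  · exact Eventually.of_forall fun p => (by fun_prop : Measurable _).aestronglyMeasurable
  · filter_upwards [hnear] with p ⟨hp, hpξ⟩
    filter_upwards [hge] with x hx
    have hlow := one_sub_mul_le_mul_sub_add_one (u := p.1) hx hp.le
    rw [norm_inv, Real.norm_of_nonneg (by linarith)]
    exact inv_anti₀ (by linarith) (by linarith)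
  · filter_upwards [ae_wealth_pos hge hr.le hru] with x hx
    exact ContinuousAt.inv₀ (by fun_prop) hx.ne'

end LogGrowth

section ProbabilityLogGrowth

variable {Ω : Type*} [MeasurableSpace Ω] {μ : Measure Ω} [IsProbabilityMeasure μ] {a : Ω → ℝ}
  {ξ u r : ℝ}

theorem logGrowthSlope_eq (hmeas : Measurable a) (hge : ∀ᵐ x ∂μ, ξ ≤ a x) (hr : 0 < r)
    (hru : r * (u - ξ) < 1) : logGrowthSlope μ a u r = (1 - invWealthMean μ a u r) / r := by
  rw [logGrowthSlope, integral_congr_ae (sub_div_wealth_ae_eq hge hr hru), integral_div,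
    integral_sub (integrable_const 1) (integrable_inv_wealth hmeas hge hr.le hru)]
  simp [invWealthMean]

theorem continuousAt_logGrowthSlope_left (hmeas : Measurable a) (hge : ∀ᵐ x ∂μ, ξ ≤ a x)
    (hr : 0 < r) (hru : r * (u - ξ) < 1) : ContinuousAt (fun v => logGrowthSlope μ a v r) u := by
  have hnear : ∀ᶠ v in 𝓝 u, r * (v - ξ) < 1 :=
    (by fun_prop : Continuous fun v => r * (v - ξ)).continuousAt.eventually (eventually_lt_nhds hru)
  refine ContinuousAt.congr ?_ (hnear.mono fun v hv => (logGrowthSlope_eq hmeas hge hr hv).symm)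
  exact (continuousAt_const.sub ((continuousAt_invWealthMean hmeas hge hr hru).comp
    (f := fun v => (v, r)) (continuousAt_id.prodMk continuousAt_const))).div_const r

def admissibleRatios (ξ : ℝ) : Set (ℝ × ℝ) := {p | ξ < p.1 ∧ 0 < p.2 ∧ p.2 * (p.1 - ξ) < 1}

theorem isOpen_admissibleRatios (ξ : ℝ) : IsOpen (admissibleRatios ξ) :=
  (isOpen_lt continuous_const continuous_fst).inter <|
    (isOpen_lt continuous_const continuous_snd).inter <|
      isOpen_lt (continuous_snd.mul (continuous_fst.sub continuous_const)) continuous_const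

theorem continuousAt_of_logGrowthSlope_eq_zero (hmeas : Measurable a) (hge : ∀ᵐ x ∂μ, ξ ≤ a x)
    (hbelow : ∀ v, ξ < v → μ {x | a x < v} ≠ 0) {ρ : ℝ → ℝ}
    (hρ : ∀ᶠ v in 𝓝 u, (v, ρ v) ∈ admissibleRatios ξ ∧ logGrowthSlope μ a v (ρ v) = 0) :
    ContinuousAt ρ u := by
  refine continuousAt_of_strictAntiOn_of_eq_zero (isOpen_admissibleRatios ξ) (fun v => ?_)
    (fun r ⟨_, hr, hru⟩ => continuousAt_logGrowthSlope_left hmeas hge hr hru) hρ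
  intro r ⟨hξv, hr⟩ r' ⟨_, hr'⟩
  exact logGrowthSlope_strictAntiOn hmeas hge (hbelow v hξv) hr hr'

theorem hasDerivAt_logGrowth_of_logGrowthSlope_eq_zero (hmeas : Measurable a)
    (hge : ∀ᵐ x ∂μ, ξ ≤ a x) (hlog : IntegrableOn (fun x => log (a x)) {x | 1 < a x} μ)
    (hbelow : ∀ v, ξ < v → μ {x | a x < v} ≠ 0) {ρ : ℝ → ℝ}
    (hρ : ∀ᶠ v in 𝓝 u, (v, ρ v) ∈ admissibleRatios ξ ∧ logGrowthSlope μ a v (ρ v) = 0) :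
    HasDerivAt (fun v => logGrowth μ a v (ρ v)) (-ρ u) u := by
  have hρc := continuousAt_of_logGrowthSlope_eq_zero hmeas hge hbelow hρ
  obtain ⟨⟨-, hρu, hρuξ⟩, hzero⟩ := hρ.self_of_nhds
  have hI : invWealthMean μ a u (ρ u) = 1 := by
    rw [logGrowthSlope_eq hmeas hge hρu hρuξ, div_eq_zero_iff] at hzero
    exact (sub_eq_zero.1 (hzero.resolve_right hρu.ne')).symm
  have hcross : ∀ᶠ v in 𝓝 u, 0 < ρ v ∧ ρ v * (u - ξ) < 1 ∧ ρ u * (v - ξ) < 1 :=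
    (hρc.eventually (lt_mem_nhds hρu)).and <|
      ((hρc.mul_const (u - ξ)).eventually (eventually_lt_nhds hρuξ)).and <|
        (by fun_prop : Continuous fun v => ρ u * (v - ξ)).continuousAt.eventually
          (eventually_lt_nhds hρuξ)
  refine hasDerivAt_of_tendsto_of_sub_le_of_le_sub
    (A := fun v => -(ρ v * invWealthMean μ a u (ρ v)))
    (B := fun v => -(ρ u * invWealthMean μ a v (ρ u))) ?_ ?_ ?_ ?_
  · have hA : ContinuousAt (fun v => -(ρ v * invWealthMean μ a u (ρ v))) u :=
      (hρc.mul ((continuousAt_invWealthMean hmeas hge hρu hρuξ).comp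
        (f := fun v => (u, ρ v)) (continuousAt_const.prodMk hρc))).neg
    simpa [ContinuousAt, hI] using hA
  · have hB : ContinuousAt (fun v => -(ρ u * invWealthMean μ a v (ρ u))) u :=
      (continuousAt_const.mul ((continuousAt_invWealthMean hmeas hge hρu hρuξ).comp
        (f := fun v => (v, ρ u)) (continuousAt_id.prodMk continuousAt_const))).neg
    simpa [ContinuousAt, hI] using hB
  · filter_upwards [hρ, hcross] with v ⟨⟨_, _, hρvξ⟩, _⟩ ⟨hρv, hρvu, _⟩
    have hmove := logGrowth_le_add_mul_invWealthMean hmeas hge hlog hρv.le hρvu hρvξ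
    have hmax := logGrowth_le_of_logGrowthSlope_eq_zero hmeas hge hlog hρu hρuξ hzero hρv.le hρvu
    linarith
  · filter_upwards [hρ, hcross] with v ⟨⟨_, hρv, hρvξ⟩, hzerov⟩ ⟨_, _, hρuv⟩
    have hmove := logGrowth_le_add_mul_invWealthMean hmeas hge hlog hρu.le hρuv hρuξ
    have hmax := logGrowth_le_of_logGrowthSlope_eq_zero hmeas hge hlog hρv hρvξ hzerov hρu.le hρuv
    linarith

end ProbabilityLogGrowth

theorem integrableOn_log_of_setLIntegral_lt_top {Ω : Type*} [MeasurableSpace Ω] {μ : Measure Ω}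
    {a : Ω → ℝ} (hmeas : Measurable a)
    (hlog : ∫⁻ x in {x | 1 < a x}, ENNReal.ofReal (log (a x)) ∂μ < ⊤) :
    IntegrableOn (fun x => log (a x)) {x | 1 < a x} μ := by
  have hs : MeasurableSet {x | 1 < a x} := measurableSet_lt measurable_const hmeas
  refine ⟨(measurable_log.comp hmeas).aestronglyMeasurable, ?_⟩
  rwa [hasFiniteIntegral_iff_ofReal
    ((ae_restrict_iff' hs).2 (ae_of_all _ fun x (hx : 1 < a x) => log_nonneg hx.le))]

theorem mem_admissibleRatios_div {ξ u t : ℝ} (hu : 0 < u) (hξu : ξ < u)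
    (ht : t ∈ Ioo 0 (u / (u - ξ))) : (u, t / u) ∈ admissibleRatios ξ := by
  refine ⟨hξu, div_pos ht.1 hu, ?_⟩
  rw [div_mul_eq_mul_div, div_lt_one hu, ← lt_div_iff₀ (sub_pos.2 hξu)]
  exact ht.2

theorem isOpen_and_convex_setOf_lt_and_lt_or (m E : ℝ) (P : Prop) :
    IsOpen {u : ℝ | m < u ∧ (u < E ∨ P)} ∧ Convex ℝ {u : ℝ | m < u ∧ (u < E ∨ P)} := by
  by_cases hP : P
  · simp only [hP, or_true, and_true]
    exact ⟨isOpen_Ioi, convex_Ioi m⟩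
  · simp only [hP, or_false]
    exact ⟨isOpen_Ioo, convex_Ioo m E⟩

theorem stmt17_general {Ω : Type*} [MeasurableSpace Ω] (μ : Measure Ω) [IsProbabilityMeasure μ]
    (a : Ω → ℝ) (hmeas : Measurable a) (ξ : ℝ)
    (hge : ∀ᵐ x ∂μ, ξ ≤ a x)
    (hinf : ∀ ε > 0, 0 < μ {x | a x < ξ + ε})
    (hlog : ∫⁻ x in {x | 1 < a x}, ENNReal.ofReal (Real.log (a x)) ∂μ < ⊤)
    (T : ℝ → ℝ)
    (hT : ∀ u,
      max 0 (ξ + (∫⁻ x, ENNReal.ofReal ((a x - ξ)⁻¹) ∂μ)⁻¹.toReal) < u →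
      (u < ∫ x, a x ∂μ ∨ ¬ Integrable a μ) →
      T u ∈ Ioo 0 (u / (u - ξ)) ∧
        ∫ x, (a x - u) / (a x * T u - u * T u + u) ∂μ = 0) :
    (∀ u ∈ {u : ℝ |
        max 0 (ξ + (∫⁻ x, ENNReal.ofReal ((a x - ξ)⁻¹) ∂μ)⁻¹.toReal) < u ∧
        (u < ∫ x, a x ∂μ ∨ ¬ Integrable a μ)},
      1 < Real.exp (∫ x, Real.log (a x * T u / u - T u + 1) ∂μ)) ∧
    StrictAntiOn (fun u => Real.exp (∫ x, Real.log (a x * T u / u - T u + 1) ∂μ))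
      {u : ℝ | max 0 (ξ + (∫⁻ x, ENNReal.ofReal ((a x - ξ)⁻¹) ∂μ)⁻¹.toReal) < u ∧
        (u < ∫ x, a x ∂μ ∨ ¬ Integrable a μ)} ∧
    (∀ u ∈ {u : ℝ |
        max 0 (ξ + (∫⁻ x, ENNReal.ofReal ((a x - ξ)⁻¹) ∂μ)⁻¹.toReal) < u ∧
        (u < ∫ x, a x ∂μ ∨ ¬ Integrable a μ)},
      HasDerivAt (fun v => Real.exp (∫ x, Real.log (a x * T v / v - T v + 1) ∂μ))
        (-(T u / u) * Real.exp (∫ x, Real.log (a x * T u / u - T u + 1) ∂μ)) u) := by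
  set S := {u : ℝ | max 0 (ξ + (∫⁻ x, ENNReal.ofReal ((a x - ξ)⁻¹) ∂μ)⁻¹.toReal) < u ∧
    (u < ∫ x, a x ∂μ ∨ ¬ Integrable a μ)}
  have hS : IsOpen S ∧ Convex ℝ S := isOpen_and_convex_setOf_lt_and_lt_or _ _ _
  have hlog' := integrableOn_log_of_setLIntegral_lt_top hmeas hlog
  have hbelow (v : ℝ) (hv : ξ < v) : μ {x | a x < v} ≠ 0 := by
    simpa using (hinf (v - ξ) (sub_pos.2 hv)).ne'
  have hpos (v : ℝ) (hv : v ∈ S) : 0 < v ∧ ξ < v :=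
    ⟨(le_max_left _ _).trans_lt hv.1,
      ((le_add_of_nonneg_right ENNReal.toReal_nonneg).trans (le_max_right _ _)).trans_lt hv.1⟩
  have hcrit (v : ℝ) (hv : v ∈ S) :
      (v, T v / v) ∈ admissibleRatios ξ ∧ logGrowthSlope μ a v (T v / v) = 0 := by
    obtain ⟨hTv, hzero⟩ := hT v hv.1 hv.2
    exact ⟨mem_admissibleRatios_div (hpos v hv).1 (hpos v hv).2 hTv,
      by rw [logGrowthSlope_div (hpos v hv).1.ne', hzero, mul_zero]⟩
  have hG (v : ℝ) (hv : v ∈ S) := logGrowth_div (μ := μ) (a := a) (t := T v) (hpos v hv).1.ne'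
  have hderiv (u : ℝ) (hu : u ∈ S) :
      HasDerivAt (fun v => exp (∫ x, log (a x * T v / v - T v + 1) ∂μ))
        (-(T u / u) * exp (∫ x, log (a x * T u / u - T u + 1) ∂μ)) u := by
    have h := (hasDerivAt_logGrowth_of_logGrowthSlope_eq_zero hmeas hge hlog' hbelow
      (Filter.mem_of_superset (hS.1.mem_nhds hu) hcrit)).exp
    rw [hG u hu, mul_comm] at h
    exact h.congr_of_eventuallyEq
      (Filter.mem_of_superset (hS.1.mem_nhds hu) fun v hv => congrArg exp (hG v hv).symm)
  refine ⟨fun u hu => ?_, strictAntiOn_of_deriv_neg hS.2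
    (fun u hu => (hderiv u hu).continuousAt.continuousWithinAt) fun u hu => ?_, hderiv⟩
  · rw [← hG u hu, one_lt_exp_iff]
    obtain ⟨⟨-, hρ, hρξ⟩, hzero⟩ := hcrit u hu
    exact logGrowth_pos_of_logGrowthSlope_eq_zero hmeas hge hlog' (hbelow u (hpos u hu).2)
      hρ hρξ hzero
  · rw [hS.1.interior_eq] at hu
    rw [(hderiv u hu).deriv]
    exact mul_neg_of_neg_of_pos (neg_neg_of_pos (hcrit u hu).1.2.1) (exp_pos _)

/-- Let `T u = t̃_u` be the pre-optimal proportion for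
`u ∈ (max(0, ξ+1/H_ξ), E)`, and assume `∫_{a>1} log a dF < +∞`. Then
`G̃_u(t̃_u) > 1`, `u ↦ G̃_u(t̃_u)` is strictly decreasing, and
`∂G̃_u(t̃_u)/∂u = -(t̃_u/u)·G̃_u(t̃_u)`. -/
theorem stmt17 {Ω : Type*} [MeasurableSpace Ω] (μ : Measure Ω) [IsProbabilityMeasure μ]
    (a : Ω → ℝ) (hmeas : Measurable a) (ξ : ℝ)
    (hge : ∀ᵐ x ∂μ, ξ ≤ a x)
    (hinf : ∀ ε > 0, 0 < μ {x | a x < ξ + ε})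
    (hnc : ∃ δ > 0, μ {x | a x < ξ + δ} < 1)
    (hlog : ∫⁻ x in {x | 1 < a x}, ENNReal.ofReal (Real.log (a x)) ∂μ < ⊤)
    (T : ℝ → ℝ)
    (hT : ∀ u,
      max 0 (ξ + (∫⁻ x, ENNReal.ofReal ((a x - ξ)⁻¹) ∂μ)⁻¹.toReal) < u →
      (u < ∫ x, a x ∂μ ∨ ¬ Integrable a μ) →
      T u ∈ Ioo 0 (u / (u - ξ)) ∧
        ∫ x, (a x - u) / (a x * T u - u * T u + u) ∂μ = 0) :
    (∀ u ∈ {u : ℝ |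
        max 0 (ξ + (∫⁻ x, ENNReal.ofReal ((a x - ξ)⁻¹) ∂μ)⁻¹.toReal) < u ∧
        (u < ∫ x, a x ∂μ ∨ ¬ Integrable a μ)},
      1 < Real.exp (∫ x, Real.log (a x * T u / u - T u + 1) ∂μ)) ∧
    StrictAntiOn (fun u => Real.exp (∫ x, Real.log (a x * T u / u - T u + 1) ∂μ))
      {u : ℝ | max 0 (ξ + (∫⁻ x, ENNReal.ofReal ((a x - ξ)⁻¹) ∂μ)⁻¹.toReal) < u ∧
        (u < ∫ x, a x ∂μ ∨ ¬ Integrable a μ)} ∧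
    (∀ u ∈ {u : ℝ |
        max 0 (ξ + (∫⁻ x, ENNReal.ofReal ((a x - ξ)⁻¹) ∂μ)⁻¹.toReal) < u ∧
        (u < ∫ x, a x ∂μ ∨ ¬ Integrable a μ)},
      HasDerivAt (fun v => Real.exp (∫ x, Real.log (a x * T v / v - T v + 1) ∂μ))
        (-(T u / u) * Real.exp (∫ x, Real.log (a x * T u / u - T u + 1) ∂μ)) u) :=
  stmt17_general μ a hmeas ξ hge hinf hlog T hT
end
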